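/- arXiv:1902.08055 — 5 statements merged into one kernel-verified Lean document; each statement's English description precedes it below -/
import Mathlib

section
/- The rewrite system R(F̂_ω) is canonical: the rewrite relation →_ω it generates on numeric terms T^ω is terminating (strongly normalizing) and confluent. -/
namespace Schematic

/-- Numeric terms `T^ω`: built from `0̄`, parameters (indexed by `ℕ`), the successor `s`, and
defined numeric function symbols `f̂ ∈ F̂_ω` (the symbol type `F`), where `f̂ ∈ F` has arity
`ar f + 1`. -/
inductive NTerm (F : Type) (ar : F → ℕ) : Type where
  | zero : NTerm F ar
  | param : ℕ → NTerm F ar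
  | succ : NTerm F ar → NTerm F ar
  | defd : (f : F) → (Fin (ar f + 1) → NTerm F ar) → NTerm F ar

namespace NTerm

variable {F : Type} {ar : F → ℕ}

/-- The numeral `s^β(0̄)`. -/
def ofNat (F : Type) (ar : F → ℕ) : ℕ → NTerm F ar
  | 0 => zero
  | n + 1 => succ (ofNat F ar n)

/-- Homomorphic substitution of parameters. -/
def subst (σ : ℕ → NTerm F ar) : NTerm F ar → NTerm F ar
  | zero => zero
  | param n => σ n
  | succ t => succ (t.subst σ)
  | defd f ts => defd f fun i => (ts i).subst σ

/-- The parameter `n` occurs in the term. -/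
def HasParam (n : ℕ) : NTerm F ar → Prop
  | zero => False
  | param m => m = n
  | succ t => t.HasParam n
  | defd _ ts => ∃ i, (ts i).HasParam n

/-- The defined symbol `g` occurs in the term. -/
def HasSymb (g : F) : NTerm F ar → Prop
  | zero => False
  | param _ => False
  | succ t => t.HasSymb g
  | defd f ts => f = g ∨ ∃ i, (ts i).HasSymb g

/-- The term contains no defined function symbols (i.e. it belongs to `T^ω₀`). -/
def NoDefd : NTerm F ar → Prop
  | zero => True
  | param _ => True
  | succ t => t.NoDefd
  | defd _ _ => False

/-- The term is a numeral `s^β(0̄)`. -/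
def IsNumeral : NTerm F ar → Prop
  | zero => True
  | param _ => False
  | succ t => t.IsNumeral
  | defd _ _ => False

/-- Evaluation of defined-symbol-free numeric terms under a parameter assignment
(junk value `0` on defined symbols). -/
def eval0 (σ : ℕ → ℕ) : NTerm F ar → ℕ
  | zero => 0
  | param n => σ n
  | succ t => t.eval0 σ + 1
  | defd _ _ => 0

end NTerm

variable {F : Type} {ar : F → ℕ}

/-- The substitution sending parameter `n < k` to `ts n` and fixing all other parameters. -/
def cutSub (k : ℕ) (ts : Fin k → NTerm F ar) : ℕ → NTerm F ar := fun n =>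
  if h : n < k then ts ⟨n, h⟩ else NTerm.param n

/-- Like `cutSub` but additionally sending the parameter `k` (the recursion parameter `m`)
to `u`. -/
def cutSub2 (k : ℕ) (ts : Fin k → NTerm F ar) (u : NTerm F ar) : ℕ → NTerm F ar := fun n =>
  if h : n < k then ts ⟨n, h⟩ else if n = k then u else NTerm.param n

/-- Like `cutSub2` but additionally sending parameter `k + 1` (the placeholder `k` for the
recursive call) to `recc`. -/
def stepSub (k : ℕ) (ts : Fin k → NTerm F ar) (u recc : NTerm F ar) : ℕ → NTerm F ar := fun n =>
  if h : n < k then ts ⟨n, h⟩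
  else if n = k then u
  else if n = k + 1 then recc
  else NTerm.param n

/-- Defining equations `D(f̂)` for the numeric defined symbols: for `f̂` of arity `α + 1`
(`α = ar f̂`), `base f̂ = t_B` uses only the parameters `0,…,α-1` (standing for `n₁,…,n_α`) and
`step f̂ = t_S` uses only the parameters `0,…,α+1`, where parameter `α` stands for `m` and
parameter `α+1` stands for the placeholder `k` of the recursive call
`f̂(n₁,…,n_α,m)`. -/
structure NumDefs (F : Type) (ar : F → ℕ) where
  base : F → NTerm F ar
  step : F → NTerm F ar

/-- Wellformedness of the numeric defining equations with respect to the order `prec` on the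
defined symbols: parameter conditions and the condition that all defined symbols occurring in
`t_B, t_S` are `prec`-smaller than `f̂`. -/
structure GoodNumDefs (prec : F → F → Prop) (D : NumDefs F ar) : Prop where
  base_params : ∀ f n, (D.base f).HasParam n → n < ar f
  step_params : ∀ f n, (D.step f).HasParam n → n < ar f + 2
  base_symbs : ∀ f g, (D.base f).HasSymb g → prec g f
  step_symbs : ∀ f g, (D.step f).HasSymb g → prec g f

end Schematic
namespace Schematic

variable {F : Type} {ar : F → ℕ}

/-- The one-step rewrite relation `→_ω` generated by the rewrite system `R(F̂_ω)`,
obtained by orienting the defining equations from left to right; the rules are applicable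
under arbitrary instantiation of the parameters and inside any term context. -/
inductive NStep (D : NumDefs F ar) : NTerm F ar → NTerm F ar → Prop where
  | baseRule (f : F) (ts : Fin (ar f) → NTerm F ar) :
      NStep D (NTerm.defd f (Fin.snoc ts NTerm.zero)) ((D.base f).subst (cutSub (ar f) ts))
  | stepRule (f : F) (ts : Fin (ar f) → NTerm F ar) (u : NTerm F ar) :
      NStep D (NTerm.defd f (Fin.snoc ts (NTerm.succ u)))
        ((D.step f).subst (stepSub (ar f) ts u (NTerm.defd f (Fin.snoc ts u))))
  | succCong {t t' : NTerm F ar} : NStep D t t' → NStep D (NTerm.succ t) (NTerm.succ t')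
  | argCong (f : F) (ts ts' : Fin (ar f + 1) → NTerm F ar) (i : Fin (ar f + 1)) :
      NStep D (ts i) (ts' i) → (∀ j, j ≠ i → ts j = ts' j) →
      NStep D (NTerm.defd f ts) (NTerm.defd f ts')

end Schematic

/-!
Termination: by `≺`-recursion, each defined symbol `f̂` of arity `α + 1` is interpreted as a
function `ℕ^(α+1) → ℕ` that is strictly monotone in every argument and whose values at
`(n⃗, 0)` and `(n⃗, m + 1)` exceed the values of the right-hand sides of the two defining
equations. The value of a term under any assignment of its parameters then strictly decreases
along every rewrite step.

Confluence: the last argument (`0̄` or `s(m)`) decides which rule applies at a redex, and all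
left-hand sides are linear, so there are no critical overlaps and every local peak can be
joined; Newman's lemma does the rest.
-/

theorem Relation.newman {α : Type*} {r : α → α → Prop} (hwf : WellFounded fun b a => r a b)
    (hlc : ∀ a b c, r a b → r a c → Relation.Join (Relation.ReflTransGen r) b c) :
    ∀ a b c, Relation.ReflTransGen r a b → Relation.ReflTransGen r a c →
      Relation.Join (Relation.ReflTransGen r) b c := by
  intro a
  induction a using hwf.induction with
  | _ a ih =>
    intro b c hab hac
    rcases hab.cases_head with rfl | ⟨a₁, ha₁, h₁b⟩
    · exact ⟨c, hac, .refl⟩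
    rcases hac.cases_head with rfl | ⟨a₂, ha₂, h₂c⟩
    · exact ⟨b, .refl, hab⟩
    obtain ⟨d, h₁d, h₂d⟩ := hlc a a₁ a₂ ha₁ ha₂
    obtain ⟨e, hbe, hde⟩ := ih a₁ ha₁ b d h₁b h₁d
    obtain ⟨g, heg, hcg⟩ := ih a₂ ha₂ e c (h₂d.trans hde) h₂c
    exact ⟨g, hbe.trans heg, hcg⟩

namespace Schematic

open Relation

variable {F : Type} {ar : F → ℕ} {J J₁ J₂ : ∀ f : F, (Fin (ar f + 1) → ℕ) → ℕ}
  {σ : ℕ → ℕ}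

namespace NTerm

def interp (J : ∀ f : F, (Fin (ar f + 1) → ℕ) → ℕ) (σ : ℕ → ℕ) : NTerm F ar → ℕ
  | zero => 0
  | param n => σ n
  | succ t => t.interp J σ + 1
  | defd f ts => J f fun i => (ts i).interp J σ

theorem interp_congr_params {σ₁ σ₂ : ℕ → ℕ} (t : NTerm F ar)
    (h : ∀ n, t.HasParam n → σ₁ n = σ₂ n) : t.interp J σ₁ = t.interp J σ₂ := by
  induction t with
  | zero => rfl
  | param n => exact h n rfl
  | succ t ih => simp only [interp, ih h]
  | defd f ts ih =>
    simp only [interp]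
    congr 1
    funext i
    exact ih i fun n hn => h n ⟨i, hn⟩

theorem interp_congr_symbs (t : NTerm F ar) (h : ∀ g, t.HasSymb g → J₁ g = J₂ g) :
    t.interp J₁ σ = t.interp J₂ σ := by
  induction t with
  | zero | param _ => rfl
  | succ t ih => simp only [interp, ih h]
  | defd f ts ih =>
    simp only [interp]
    rw [h f (Or.inl rfl)]
    congr 1
    funext i
    exact ih i fun g hg => h g (Or.inr ⟨i, hg⟩)

theorem interp_subst (τ : ℕ → NTerm F ar) (t : NTerm F ar) :
    (t.subst τ).interp J σ = t.interp J fun n => (τ n).interp J σ := by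
  induction t with
  | zero | param _ => rfl
  | succ t ih => simp only [subst, interp, ih]
  | defd f ts ih => simp only [subst, interp, ih]

theorem interp_mono (t : NTerm F ar) (hJ : ∀ g, t.HasSymb g → Monotone (J g)) :
    Monotone fun σ => t.interp J σ := by
  intro σ₁ σ₂ hσ
  induction t with
  | zero => exact le_rfl
  | param n => exact hσ n
  | succ t ih => exact Nat.succ_le_succ (ih hJ)
  | defd f ts ih => exact hJ f (Or.inl rfl) fun i => ih i fun g hg => hJ g (Or.inr ⟨i, hg⟩)

end NTerm

def cutAssign {k : ℕ} (xs : Fin k → ℕ) : ℕ → ℕ := fun n =>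
  if h : n < k then xs ⟨n, h⟩ else 0

def stepAssign {k : ℕ} (xs : Fin k → ℕ) (y r : ℕ) : ℕ → ℕ := fun n =>
  if h : n < k then xs ⟨n, h⟩ else if n = k then y else if n = k + 1 then r else 0

theorem cutAssign_mono {k : ℕ} : Monotone (cutAssign (k := k)) := by
  intro xs xs' h n
  unfold cutAssign
  split_ifs
  exacts [h _, le_rfl]

theorem stepAssign_mono {k : ℕ} {xs xs' : Fin k → ℕ} {y y' r r' : ℕ} (hxs : xs ≤ xs')
    (hy : y ≤ y') (hr : r ≤ r') : stepAssign xs y r ≤ stepAssign xs' y' r' := by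
  intro n
  unfold stepAssign
  split_ifs
  exacts [hxs _, hy, hr, le_rfl]

theorem interp_subst_cutSub {k : ℕ} {t : NTerm F ar} (ht : ∀ n, t.HasParam n → n < k)
    (ts : Fin k → NTerm F ar) :
    (t.subst (cutSub k ts)).interp J σ = t.interp J (cutAssign fun i => (ts i).interp J σ) := by
  rw [NTerm.interp_subst]
  refine NTerm.interp_congr_params t fun n hn => ?_
  simp [cutSub, cutAssign, ht n hn]

theorem interp_subst_stepSub {k : ℕ} {t : NTerm F ar} (ht : ∀ n, t.HasParam n → n < k + 2)
    (ts : Fin k → NTerm F ar) (u r : NTerm F ar) :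
    (t.subst (stepSub k ts u r)).interp J σ =
      t.interp J (stepAssign (fun i => (ts i).interp J σ) (u.interp J σ) (r.interp J σ)) := by
  rw [NTerm.interp_subst]
  refine NTerm.interp_congr_params t fun n hn => ?_
  have := ht n hn
  unfold stepSub stepAssign
  split_ifs <;> first | rfl | omega

/-- The summands `∑ i, xs i + 1` and `recInterp D J f xs y + 1` make the function strictly
monotone in every argument and larger than the right-hand sides of the defining equations. -/
def recInterp (D : NumDefs F ar) (J : ∀ f : F, (Fin (ar f + 1) → ℕ) → ℕ) (f : F)
    (xs : Fin (ar f) → ℕ) : ℕ → ℕ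
  | 0 => (D.base f).interp J (cutAssign xs) + ∑ i, xs i + 1
  | y + 1 =>
    (D.step f).interp J (stepAssign xs y (recInterp D J f xs y)) + recInterp D J f xs y + 1

variable {D : NumDefs F ar} {f : F}

theorem recInterp_congr (hb : ∀ g, (D.base f).HasSymb g → J₁ g = J₂ g)
    (hs : ∀ g, (D.step f).HasSymb g → J₁ g = J₂ g) :
    recInterp D J₁ f = recInterp D J₂ f := by
  funext xs y
  induction y with
  | zero => simp only [recInterp, NTerm.interp_congr_symbs _ hb]
  | succ y ih => simp only [recInterp, ih, NTerm.interp_congr_symbs _ hs]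

theorem recInterp_strictMono_right (xs : Fin (ar f) → ℕ) : StrictMono (recInterp D J f xs) :=
  strictMono_nat_of_lt_succ fun y => by simp only [recInterp]; omega

theorem recInterp_strictMono_left (hb : ∀ g, (D.base f).HasSymb g → Monotone (J g))
    (hs : ∀ g, (D.step f).HasSymb g → Monotone (J g)) (y : ℕ) :
    StrictMono fun xs => recInterp D J f xs y := by
  intro xs xs' hlt
  induction y with
  | zero =>
    have hbase := NTerm.interp_mono _ hb (cutAssign_mono hlt.le)
    have hsum := Fintype.sum_strictMono hlt
    simp only [recInterp] at hbase hsum ⊢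
    omega
  | succ y ih =>
    have hstep := NTerm.interp_mono _ hs (stepAssign_mono hlt.le (le_refl y) ih.le)
    simp only [recInterp] at hstep ih ⊢
    omega

theorem recInterp_strictMono (hb : ∀ g, (D.base f).HasSymb g → Monotone (J g))
    (hs : ∀ g, (D.step f).HasSymb g → Monotone (J g)) :
    StrictMono fun v : Fin (ar f + 1) → ℕ => recInterp D J f (Fin.init v) (v (Fin.last _)) := by
  intro v w hvw
  have hlast : v (Fin.last _) ≤ w (Fin.last _) := hvw.le _
  have hinit : Fin.init v ≤ Fin.init w := fun i => hvw.le i.castSucc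
  rcases hinit.lt_or_eq with hinit | hinit
  · calc recInterp D J f (Fin.init v) (v (Fin.last _))
        < recInterp D J f (Fin.init w) (v (Fin.last _)) :=
          recInterp_strictMono_left hb hs _ hinit
      _ ≤ recInterp D J f (Fin.init w) (w (Fin.last _)) :=
          (recInterp_strictMono_right _).monotone hlast
  · have hlast_lt : v (Fin.last _) < w (Fin.last _) := by
      refine hlast.lt_of_ne fun h => hvw.ne ?_
      rw [← Fin.snoc_init_self v, ← Fin.snoc_init_self w, hinit, h]
    simp only [hinit]
    exact recInterp_strictMono_right _ hlast_lt

variable {prec : F → F → Prop} {hwf : WellFounded prec}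

open Classical in
/-- The junk value `0` is never used when `GoodNumDefs prec D` holds (see `symbInterp_eq`). -/
noncomputable def symbInterp (D : NumDefs F ar) (hwf : WellFounded prec) :
    ∀ f : F, (Fin (ar f + 1) → ℕ) → ℕ :=
  hwf.fix fun f ih v =>
    recInterp D (fun g => if h : prec g f then ih g h else fun _ => 0) f
      (Fin.init v) (v (Fin.last _))

theorem symbInterp_eq (hD : GoodNumDefs prec D) (f : F) (v : Fin (ar f + 1) → ℕ) :
    symbInterp D hwf f v = recInterp D (symbInterp D hwf) f (Fin.init v) (v (Fin.last _)) := by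
  unfold symbInterp
  rw [hwf.fix_eq]
  exact congrFun₂ (recInterp_congr (fun g hg => dif_pos (hD.base_symbs f g hg))
    (fun g hg => dif_pos (hD.step_symbs f g hg))) _ _

theorem symbInterp_strictMono (hD : GoodNumDefs prec D) (f : F) :
    StrictMono (symbInterp D hwf f) := by
  induction f using hwf.induction with
  | _ f ih =>
    have hmono : ∀ g, prec g f → Monotone (symbInterp D hwf g) := fun g hg => (ih g hg).monotone
    rw [funext (symbInterp_eq hD f)]
    exact recInterp_strictMono (fun g hg => hmono g (hD.base_symbs f g hg))
      (fun g hg => hmono g (hD.step_symbs f g hg))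

theorem interp_defd_snoc (hD : GoodNumDefs prec D) (ts : Fin (ar f) → NTerm F ar)
    (x : NTerm F ar) :
    (NTerm.defd f (Fin.snoc ts x)).interp (symbInterp D hwf) σ =
      recInterp D (symbInterp D hwf) f (fun i => (ts i).interp (symbInterp D hwf) σ)
        (x.interp (symbInterp D hwf) σ) := by
  change symbInterp D hwf f (NTerm.interp _ σ ∘ Fin.snoc ts x) = _
  rw [Fin.comp_snoc, symbInterp_eq hD, Fin.init_snoc, Fin.snoc_last]
  rfl

theorem NStep.interp_lt (hD : GoodNumDefs prec D) {t t' : NTerm F ar} (h : NStep D t t')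
    (σ : ℕ → ℕ) : t'.interp (symbInterp D hwf) σ < t.interp (symbInterp D hwf) σ := by
  induction h generalizing σ with
  | baseRule f ts =>
    rw [interp_defd_snoc hD, interp_subst_cutSub (hD.base_params f)]
    simp only [NTerm.interp, recInterp]
    omega
  | stepRule f ts u =>
    rw [interp_defd_snoc hD, interp_subst_stepSub (hD.step_params f), interp_defd_snoc hD]
    simp only [NTerm.interp, recInterp]
    omega
  | succCong _ ih => exact Nat.succ_lt_succ (ih σ)
  | argCong f ts ts' i _ hoff ih =>
    refine symbInterp_strictMono hD f (Pi.lt_def.2 ⟨fun j => ?_, i, ih σ⟩)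
    by_cases hj : j = i
    · subst hj
      exact (ih σ).le
    · exact (congrArg (NTerm.interp _ σ) (hoff j hj)).ge

theorem NStep.wellFounded_inv (hwf : WellFounded prec) (hD : GoodNumDefs prec D) :
    WellFounded fun t s : NTerm F ar => NStep D s t :=
  Subrelation.wf (fun h => NStep.interp_lt (hwf := hwf) hD h fun _ => 0)
    (InvImage.wf (fun t : NTerm F ar => t.interp (symbInterp D hwf) fun _ => 0) wellFounded_lt)

theorem NStep.not_zero {a : NTerm F ar} : ¬ NStep D .zero a := nofun

theorem NStep.succ_inv {t a : NTerm F ar} (h : NStep D (.succ t) a) :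
    ∃ t', a = .succ t' ∧ NStep D t t' := by
  cases h with
  | succCong h => exact ⟨_, rfl, h⟩

theorem NStep.defd_inv {v : Fin (ar f + 1) → NTerm F ar} {a : NTerm F ar}
    (h : NStep D (.defd f v) a) :
    (∃ ts, v = Fin.snoc ts .zero ∧ a = (D.base f).subst (cutSub (ar f) ts)) ∨
    (∃ ts u, v = Fin.snoc ts (.succ u) ∧
      a = (D.step f).subst (stepSub (ar f) ts u (.defd f (Fin.snoc ts u)))) ∨
    (∃ i w, NStep D (v i) w ∧ a = .defd f (Function.update v i w)) := by
  cases h with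
  | baseRule f ts => exact .inl ⟨ts, rfl, rfl⟩
  | stepRule f ts u => exact .inr (.inl ⟨ts, u, rfl, rfl⟩)
  | argCong f ts ts' i hstep hoff =>
    refine .inr (.inr ⟨i, ts' i, hstep, congrArg _ (funext fun j => ?_)⟩)
    by_cases hj : j = i
    · subst hj
      simp
    · rw [Function.update_of_ne hj, hoff j hj]

theorem NStep.defd_update (v : Fin (ar f + 1) → NTerm F ar) (i : Fin (ar f + 1))
    {a b : NTerm F ar} (h : NStep D a b) :
    NStep D (.defd f (Function.update v i a)) (.defd f (Function.update v i b)) :=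
  .argCong f _ _ i (by simpa using h) fun j hj => by simp [hj]

theorem reflTransGen_zero_inv {a : NTerm F ar} (h : ReflTransGen (NStep D) .zero a) :
    a = .zero := by
  rcases h.cases_head with rfl | ⟨_, h, _⟩
  · rfl
  · exact absurd h NStep.not_zero

theorem reflTransGen_succ_inv {t a : NTerm F ar} (h : ReflTransGen (NStep D) (.succ t) a) :
    ∃ t', a = .succ t' ∧ ReflTransGen (NStep D) t t' := by
  induction h with
  | refl => exact ⟨t, rfl, .refl⟩
  | tail _ hbc ih =>
    obtain ⟨t', rfl, ht'⟩ := ih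
    obtain ⟨t'', rfl, h⟩ := hbc.succ_inv
    exact ⟨t'', rfl, ht'.tail h⟩

theorem reflTransGen_succ {t t' : NTerm F ar} (h : ReflTransGen (NStep D) t t') :
    ReflTransGen (NStep D) (.succ t) (.succ t') :=
  ReflTransGen.lift NTerm.succ (fun _ _ => NStep.succCong) _ _ h

theorem reflTransGen_defd_update (v : Fin (ar f + 1) → NTerm F ar) (i : Fin (ar f + 1))
    {x : NTerm F ar} (h : ReflTransGen (NStep D) (v i) x) :
    ReflTransGen (NStep D) (.defd f v) (.defd f (Function.update v i x)) := by
  have h' : ReflTransGen (NStep D) (.defd f (Function.update v i (v i)))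
      (.defd f (Function.update v i x)) :=
    ReflTransGen.lift (fun a => NTerm.defd f (Function.update v i a))
      (fun _ _ => NStep.defd_update v i) _ _ h
  rwa [Function.update_eq_self] at h'

theorem reflTransGen_defd {v w : Fin (ar f + 1) → NTerm F ar}
    (h : ∀ i, ReflTransGen (NStep D) (v i) (w i)) :
    ReflTransGen (NStep D) (.defd f v) (.defd f w) := by
  classical
  suffices ∀ s : Finset (Fin (ar f + 1)),
      ReflTransGen (NStep D) (.defd f v) (.defd f (s.piecewise w v)) by
    simpa using this .univ
  intro s
  induction s using Finset.induction with
  | empty => simp only [Finset.piecewise_empty, ReflTransGen.refl]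
  | insert j s hj ih =>
    rw [Finset.piecewise_insert]
    exact ih.trans (reflTransGen_defd_update _ j (by simpa [hj] using h j))

theorem reflTransGen_subst (t : NTerm F ar) {τ τ' : ℕ → NTerm F ar}
    (h : ∀ n, ReflTransGen (NStep D) (τ n) (τ' n)) :
    ReflTransGen (NStep D) (t.subst τ) (t.subst τ') := by
  induction t with
  | zero => exact .refl
  | param n => exact h n
  | succ t ih => exact reflTransGen_succ ih
  | defd f ts ih => exact reflTransGen_defd ih

variable {v : Fin (ar f + 1) → NTerm F ar} {i i' : Fin (ar f + 1)}

theorem exists_baseRule_of_reflTransGen {ts : Fin (ar f) → NTerm F ar}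
    (h : ∀ i, ReflTransGen (NStep D)
      ((Fin.snoc ts .zero : Fin (ar f + 1) → NTerm F ar) i) (v i)) :
    ∃ a, ReflTransGen (NStep D) ((D.base f).subst (cutSub (ar f) ts)) a ∧
      NStep D (.defd f v) a := by
  have hlast : v (Fin.last _) = .zero := reflTransGen_zero_inv (by simpa using h (Fin.last _))
  obtain ⟨us, rfl⟩ : ∃ us, v = Fin.snoc us .zero :=
    ⟨Fin.init v, by rw [← hlast, Fin.snoc_init_self]⟩
  refine ⟨_, reflTransGen_subst _ fun n => ?_, .baseRule f us⟩
  unfold cutSub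
  split_ifs
  · simpa using h (Fin.castSucc _)
  · exact .refl

theorem exists_stepRule_of_reflTransGen {ts : Fin (ar f) → NTerm F ar} {u : NTerm F ar}
    (h : ∀ i, ReflTransGen (NStep D)
      ((Fin.snoc ts (.succ u) : Fin (ar f + 1) → NTerm F ar) i) (v i)) :
    ∃ a, ReflTransGen (NStep D)
      ((D.step f).subst (stepSub (ar f) ts u (.defd f (Fin.snoc ts u)))) a ∧
      NStep D (.defd f v) a := by
  obtain ⟨u', hlast, hu⟩ := reflTransGen_succ_inv (by simpa using h (Fin.last _))
  obtain ⟨us, rfl⟩ : ∃ us, v = Fin.snoc us (.succ u') :=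
    ⟨Fin.init v, by rw [← hlast, Fin.snoc_init_self]⟩
  have hts : ∀ j, ReflTransGen (NStep D) (ts j) (us j) := fun j => by simpa using h j.castSucc
  have hrec : ReflTransGen (NStep D) (.defd f (Fin.snoc ts u)) (.defd f (Fin.snoc us u')) := by
    refine reflTransGen_defd fun i => ?_
    induction i using Fin.lastCases with
    | last => simpa using hu
    | cast j => simpa using hts j
  refine ⟨_, reflTransGen_subst _ fun n => ?_, .stepRule f us u'⟩
  unfold stepSub
  split_ifs
  exacts [hts _, hu, hrec, .refl]

theorem reflTransGen_update_apply {w : NTerm F ar} (h : NStep D (v i) w) (j : Fin (ar f + 1)) :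
    ReflTransGen (NStep D) (v j) (Function.update v i w j) := by
  by_cases hj : j = i
  · subst hj
    simpa using .single h
  · rw [Function.update_of_ne hj]

theorem join_defd_update {w w' : NTerm F ar} (h : Join (ReflTransGen (NStep D)) w w') :
    Join (ReflTransGen (NStep D))
      (.defd f (Function.update v i w)) (.defd f (Function.update v i w')) := by
  obtain ⟨d, hwd, hw'd⟩ := h
  exact ⟨.defd f (Function.update v i d),
    by simpa using reflTransGen_defd_update (Function.update v i w) i (by simpa using hwd),
    by simpa using reflTransGen_defd_update (Function.update v i w') i (by simpa using hw'd)⟩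

theorem join_defd_update_of_ne (hii' : i ≠ i') {w w' : NTerm F ar} (hw : NStep D (v i) w)
    (hw' : NStep D (v i') w') :
    Join (ReflTransGen (NStep D))
      (.defd f (Function.update v i w)) (.defd f (Function.update v i' w')) := by
  refine ⟨.defd f (Function.update (Function.update v i w) i' w'), .single ?_, .single ?_⟩
  · exact .argCong f _ _ i' (by simpa [hii'.symm] using hw') fun j hj => by simp [hj]
  · rw [Function.update_comm hii']
    exact .argCong f _ _ i (by simpa [hii'] using hw) fun j hj => by simp [hj]

theorem NStep.join_defd
    (ih : ∀ i a b, NStep D (v i) a → NStep D (v i) b → Join (ReflTransGen (NStep D)) a b)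
    {a b : NTerm F ar} (ha : NStep D (.defd f v) a) (hb : NStep D (.defd f v) b) :
    Join (ReflTransGen (NStep D)) a b := by
  rcases ha.defd_inv with ⟨ts, rfl, rfl⟩ | ⟨ts, u, rfl, rfl⟩ | ⟨i, w, hw, rfl⟩
  · rcases hb.defd_inv with ⟨ts', h, rfl⟩ | ⟨ts', u', h, rfl⟩ | ⟨i', w', hw', rfl⟩
    · obtain ⟨rfl, -⟩ := Fin.snoc_injective2 h
      exact ⟨_, .refl, .refl⟩
    · exact nomatch (Fin.snoc_injective2 h).2
    · obtain ⟨d, had, hbd⟩ := exists_baseRule_of_reflTransGen (reflTransGen_update_apply hw')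
      exact ⟨d, had, .single hbd⟩
  · rcases hb.defd_inv with ⟨ts', h, rfl⟩ | ⟨ts', u', h, rfl⟩ | ⟨i', w', hw', rfl⟩
    · exact nomatch (Fin.snoc_injective2 h).2
    · obtain ⟨rfl, ⟨⟩⟩ := Fin.snoc_injective2 h
      exact ⟨_, .refl, .refl⟩
    · obtain ⟨d, had, hbd⟩ := exists_stepRule_of_reflTransGen (reflTransGen_update_apply hw')
      exact ⟨d, had, .single hbd⟩
  · rcases hb.defd_inv with ⟨ts', rfl, rfl⟩ | ⟨ts', u', rfl, rfl⟩ | ⟨i', w', hw', rfl⟩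
    · obtain ⟨d, hbd, had⟩ := exists_baseRule_of_reflTransGen (reflTransGen_update_apply hw)
      exact ⟨d, .single had, hbd⟩
    · obtain ⟨d, hbd, had⟩ := exists_stepRule_of_reflTransGen (reflTransGen_update_apply hw)
      exact ⟨d, .single had, hbd⟩
    · by_cases hii' : i = i'
      · subst hii'
        exact join_defd_update (ih i w w' hw hw')
      · exact join_defd_update_of_ne hii' hw hw'

theorem NStep.join (t : NTerm F ar) :
    ∀ a b, NStep D t a → NStep D t b → Join (ReflTransGen (NStep D)) a b := by
  induction t with
  | zero => exact fun a _ ha => absurd ha NStep.not_zero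
  | param n => exact fun _ _ ha => nomatch ha
  | succ t ih =>
    intro a b ha hb
    obtain ⟨a', rfl, ha'⟩ := ha.succ_inv
    obtain ⟨b', rfl, hb'⟩ := hb.succ_inv
    obtain ⟨d, had, hbd⟩ := ih a' b' ha' hb'
    exact ⟨.succ d, reflTransGen_succ had, reflTransGen_succ hbd⟩
  | defd f v ih => exact fun _ _ => NStep.join_defd ih

end Schematic

open Schematic

theorem statement0_general (F : Type) (ar : F → ℕ) (prec : F → F → Prop)
    (hwf : WellFounded prec)
    (D : NumDefs F ar) (hD : GoodNumDefs prec D) :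
    WellFounded (fun t s : NTerm F ar => NStep D s t) ∧
      ∀ a b c : NTerm F ar, Relation.ReflTransGen (NStep D) a b →
        Relation.ReflTransGen (NStep D) a c →
        ∃ d, Relation.ReflTransGen (NStep D) b d ∧ Relation.ReflTransGen (NStep D) c d := by
  have hterm := NStep.wellFounded_inv hwf hD
  exact ⟨hterm, Relation.newman hterm NStep.join⟩

/-- The rewrite system `R(F̂_ω)` is canonical: the rewrite relation `→_ω` it
generates on the numeric terms `T^ω` is terminating (strongly normalizing, i.e. the inverse
relation is well-founded) and confluent. -/
theorem statement0 (F : Type) (ar : F → ℕ) (prec : F → F → Prop)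
    (hirr : ∀ f, ¬ prec f f) (htrans : Transitive prec) (hwf : WellFounded prec)
    (D : NumDefs F ar) (hD : GoodNumDefs prec D) :
    WellFounded (fun t s : NTerm F ar => NStep D s t) ∧
      ∀ a b c : NTerm F ar, Relation.ReflTransGen (NStep D) a b →
        Relation.ReflTransGen (NStep D) a c →
        ∃ d, Relation.ReflTransGen (NStep D) b d ∧ Relation.ReflTransGen (NStep D) c d :=
  statement0_general F ar prec hwf D hD
end

section
/- The rewrite system R(F̂_ι), obtained by orienting the defining equations of the defined individual function symbols from left to right, is canonical: the rewrite relation →_ι is terminating (strongly normalizing) and confluent on individual terms T^ι. -/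
namespace Schematic

/-- Individual terms `T^ι`: built from `ι`-constants (`C`), V-terms `X(t₁,…,t_α)` over global
variables `X ∈ G` of type `ω^{gar X} → ι` with numeric arguments, ordinary function
applications (`Fn` with arities `far`), and defined `ι`-function symbols `f̂ ∈ Fh` of type
`(ω^{gtys f̂ 1} → ι) × … × (ω^{gtys f̂ (gnum f̂)} → ι) × ω^{nar f̂ + 1} → ι`, applied to global
variables of matching types and numeric arguments. -/
inductive ITerm (F : Type) (ar : F → ℕ) (C : Type) (Fn : Type) (far : Fn → ℕ)
    (G : Type) (gar : G → ℕ) (Fh : Type) (gnum : Fh → ℕ)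
    (gtys : (h : Fh) → Fin (gnum h) → ℕ) (nar : Fh → ℕ) : Type where
  | const : C → ITerm F ar C Fn far G gar Fh gnum gtys nar
  | vterm : (X : G) → (Fin (gar X) → NTerm F ar) → ITerm F ar C Fn far G gar Fh gnum gtys nar
  | app : (f : Fn) → (Fin (far f) → ITerm F ar C Fn far G gar Fh gnum gtys nar) →
      ITerm F ar C Fn far G gar Fh gnum gtys nar
  | defd : (h : Fh) → (Xs : Fin (gnum h) → G) → (∀ i, gar (Xs i) = gtys h i) →
      (Fin (nar h + 1) → NTerm F ar) → ITerm F ar C Fn far G gar Fh gnum gtys nar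

variable {F : Type} {ar : F → ℕ} {C : Type} {Fn : Type} {far : Fn → ℕ}
  {G : Type} {gar : G → ℕ} {Fh : Type} {gnum : Fh → ℕ}
  {gtys : (h : Fh) → Fin (gnum h) → ℕ} {nar : Fh → ℕ}

/-- Instantiation of a term over formal constants `C'` and formal global variables `G'`:
constants are mapped by `cmap`, global variables are renamed along `ren` (type preserving by
`hren`) and the parameters are substituted by `σn`. -/
def ITerm.instC {C' : Type} {G' : Type} {gar' : G' → ℕ}
    (cmap : C' → ITerm F ar C Fn far G gar Fh gnum gtys nar)
    (ren : G' → G) (hren : ∀ x, gar (ren x) = gar' x) (σn : ℕ → NTerm F ar) :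
    ITerm F ar C' Fn far G' gar' Fh gnum gtys nar → ITerm F ar C Fn far G gar Fh gnum gtys nar
  | .const c => cmap c
  | .vterm x ns => .vterm (ren x) fun j => (ns (Fin.cast (hren x) j)).subst σn
  | .app f ss => .app f fun j => (ss j).instC cmap ren hren σn
  | .defd h Ys hty ns =>
      .defd h (fun i => ren (Ys i)) (fun i => (hren (Ys i)).trans (hty i)) fun j =>
        (ns j).subst σn

/-- Defining equations `D(f̂)` for the defined `ι`-function symbols.  The bodies `t_B` and
`t_S` of `f̂` are terms whose global variables are the formal variables `X⃗` (represented by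
`Fin (gnum f̂)` with arities `gtys f̂`), whose parameters stand for `n₁,…,n_{nar f̂}` (indices
`< nar f̂`) resp. additionally `m` (index `nar f̂`), and where the extra constant
`none : Option C` is the placeholder variable `Y : ι` for the recursive call. -/
structure IDefs (F : Type) (ar : F → ℕ) (C : Type) (Fn : Type) (far : Fn → ℕ)
    (Fh : Type) (gnum : Fh → ℕ) (gtys : (h : Fh) → Fin (gnum h) → ℕ) (nar : Fh → ℕ) where
  base : (h : Fh) → ITerm F ar (Option C) Fn far (Fin (gnum h)) (gtys h) Fh gnum gtys nar
  step : (h : Fh) → ITerm F ar (Option C) Fn far (Fin (gnum h)) (gtys h) Fh gnum gtys nar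

/-- Instantiation of a defining-equation body: the formal global variables are replaced by
`Xs`, the parameters are substituted by `σn`, and the placeholder `Y` is replaced by
`recv`. -/
def instBody {h : Fh} (Xs : Fin (gnum h) → G) (hty : ∀ i, gar (Xs i) = gtys h i)
    (σn : ℕ → NTerm F ar) (recv : ITerm F ar C Fn far G gar Fh gnum gtys nar)
    (body : ITerm F ar (Option C) Fn far (Fin (gnum h)) (gtys h) Fh gnum gtys nar) :
    ITerm F ar C Fn far G gar Fh gnum gtys nar :=
  body.instC (fun o => Option.elim o recv fun c => ITerm.const c) Xs hty σn

/-- The parameter `n` occurs in the `ι`-term. -/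
def ITerm.IHasParam (n : ℕ) : ITerm F ar C Fn far G gar Fh gnum gtys nar → Prop
  | .const _ => False
  | .vterm _ ns => ∃ j, (ns j).HasParam n
  | .app _ ss => ∃ j, (ss j).IHasParam n
  | .defd _ _ _ ns => ∃ j, (ns j).HasParam n

/-- The defined `ι`-symbol `h0` occurs in the `ι`-term. -/
def ITerm.IHasIDef (h0 : Fh) : ITerm F ar C Fn far G gar Fh gnum gtys nar → Prop
  | .const _ => False
  | .vterm _ _ => False
  | .app _ ss => ∃ j, (ss j).IHasIDef h0
  | .defd h _ _ _ => h = h0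

/-- The constant `c` occurs in the `ι`-term. -/
def ITerm.IHasConst (c : C) : ITerm F ar C Fn far G gar Fh gnum gtys nar → Prop
  | .const c' => c' = c
  | .vterm _ _ => False
  | .app _ ss => ∃ j, (ss j).IHasConst c
  | .defd _ _ _ _ => False

/-- Wellformedness of the `ι` defining equations with respect to the order `precI` on the
defined `ι`-symbols: all defined `ι`-symbols occurring in the bodies are `precI`-smaller,
the parameters of `t_B` are among `n₁,…,n_β`, the parameters of `t_S` are among
`n₁,…,n_β, m`, and `t_B` does not contain the placeholder `Y`. -/
structure GoodIDefs (precI : Fh → Fh → Prop) (DI : IDefs F ar C Fn far Fh gnum gtys nar) :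
    Prop where
  base_params : ∀ h n, (DI.base h).IHasParam n → n < nar h
  step_params : ∀ h n, (DI.step h).IHasParam n → n < nar h + 1
  base_symbs : ∀ h h', (DI.base h).IHasIDef h' → precI h' h
  step_symbs : ∀ h h', (DI.step h).IHasIDef h' → precI h' h
  base_noY : ∀ h, ¬ (DI.base h).IHasConst (none : Option C)

end Schematic
namespace Schematic

variable {F : Type} {ar : F → ℕ} {C : Type} {Fn : Type} {far : Fn → ℕ}
  {G : Type} {gar : G → ℕ} {Fh : Type} {gnum : Fh → ℕ}
  {gtys : (h : Fh) → Fin (gnum h) → ℕ} {nar : Fh → ℕ}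

/-- The one-step rewrite relation `→_ι` generated by the rewrite system `R(F̂_ι)`, obtained by
orienting the defining equations of the defined `ι`-function symbols from left to right. -/
inductive IStep (DI : IDefs F ar C Fn far Fh gnum gtys nar) :
    ITerm F ar C Fn far G gar Fh gnum gtys nar →
    ITerm F ar C Fn far G gar Fh gnum gtys nar → Prop where
  | baseRule (h : Fh) (Xs : Fin (gnum h) → G) (hty : ∀ i, gar (Xs i) = gtys h i)
      (ts : Fin (nar h) → NTerm F ar) :
      IStep DI (ITerm.defd h Xs hty (Fin.snoc ts NTerm.zero))
        (instBody Xs hty (cutSub (nar h) ts)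
          (ITerm.defd h Xs hty (Fin.snoc ts NTerm.zero)) (DI.base h))
  | stepRule (h : Fh) (Xs : Fin (gnum h) → G) (hty : ∀ i, gar (Xs i) = gtys h i)
      (ts : Fin (nar h) → NTerm F ar) (u : NTerm F ar) :
      IStep DI (ITerm.defd h Xs hty (Fin.snoc ts (NTerm.succ u)))
        (instBody Xs hty (cutSub2 (nar h) ts u)
          (ITerm.defd h Xs hty (Fin.snoc ts u)) (DI.step h))
  | appCong (f : Fn) (ss ss' : Fin (far f) → ITerm F ar C Fn far G gar Fh gnum gtys nar)
      (i : Fin (far f)) :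
      IStep DI (ss i) (ss' i) → (∀ j, j ≠ i → ss j = ss' j) →
      IStep DI (ITerm.app f ss) (ITerm.app f ss')

end Schematic

open Schematic

namespace Schematic

section Aux

variable {F : Type} {ar : F → ℕ} {C : Type} {Fn : Type} {far : Fn → ℕ}
  {G : Type} {gar : G → ℕ} {Fh : Type} {gnum : Fh → ℕ}
  {gtys : (h : Fh) → Fin (gnum h) → ℕ} {nar : Fh → ℕ}
  {DI : IDefs F ar C Fn far Fh gnum gtys nar}

/-- Size of a numeric term (only the successor depth matters). -/
def NTerm.nsize : NTerm F ar → ℕ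
  | .zero => 0
  | .param _ => 0
  | .succ t => t.nsize + 1
  | .defd _ _ => 0

lemma not_step_const {c : C} {t : ITerm F ar C Fn far G gar Fh gnum gtys nar} :
    ¬ IStep DI (ITerm.const c) t := by intro h; cases h

lemma not_step_vterm {X : G} {ns : Fin (gar X) → NTerm F ar}
    {t : ITerm F ar C Fn far G gar Fh gnum gtys nar} :
    ¬ IStep DI (ITerm.vterm X ns) t := by intro h; cases h

lemma inv_app {f : Fn} {ss : Fin (far f) → ITerm F ar C Fn far G gar Fh gnum gtys nar}
    {c : ITerm F ar C Fn far G gar Fh gnum gtys nar}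
    (hstep : IStep DI (ITerm.app f ss) c) :
    ∃ ss' i, c = ITerm.app f ss' ∧ IStep DI (ss i) (ss' i) ∧ ∀ j, j ≠ i → ss j = ss' j := by
  cases hstep with
  | appCong f ss ss' i hi hoth => exact ⟨ss', i, rfl, hi, hoth⟩

lemma inv_defd {h : Fh} {Xs : Fin (gnum h) → G} {hty : ∀ i, gar (Xs i) = gtys h i}
    {ns : Fin (nar h + 1) → NTerm F ar}
    {c : ITerm F ar C Fn far G gar Fh gnum gtys nar}
    (hstep : IStep DI (ITerm.defd h Xs hty ns) c) :
    (∃ ts, ns = Fin.snoc ts NTerm.zero ∧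
      c = instBody Xs hty (cutSub (nar h) ts)
        (ITerm.defd h Xs hty (Fin.snoc ts NTerm.zero)) (DI.base h)) ∨
    (∃ ts u, ns = Fin.snoc ts (NTerm.succ u) ∧
      c = instBody Xs hty (cutSub2 (nar h) ts u)
        (ITerm.defd h Xs hty (Fin.snoc ts u)) (DI.step h)) := by
  cases hstep with
  | baseRule h Xs hty ts => exact Or.inl ⟨ts, rfl, rfl⟩
  | stepRule h Xs hty ts u => exact Or.inr ⟨ts, u, rfl, rfl⟩

lemma snoc_inj {n : ℕ} {ts ts' : Fin n → NTerm F ar} {x x' : NTerm F ar}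
    (h : (Fin.snoc ts x : Fin (n+1) → NTerm F ar) = Fin.snoc ts' x') :
    ts = ts' ∧ x = x' := by
  constructor
  · funext j
    have := congrFun h (Fin.castSucc j)
    simpa using this
  · have := congrFun h (Fin.last n)
    simpa using this

/-! ### Termination -/

/-- Accessibility of tuples under one-coordinate reduction. -/
lemma acc_tuple {α : Type} {r : α → α → Prop} :
    ∀ {n : ℕ} (f : Fin n → α), (∀ i, Acc r (f i)) →
      Acc (fun g f : Fin n → α => ∃ i, r (g i) (f i) ∧ ∀ j, j ≠ i → g j = f j) f := by
  intro n
  induction n with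
  | zero =>
    intro f _
    exact Acc.intro f fun g hg => (hg.choose).elim0
  | succ n IH =>
    intro f hf
    have hacc : Acc (Prod.GameAdd r
        (fun g f : Fin n → α => ∃ i, r (g i) (f i) ∧ ∀ j, j ≠ i → g j = f j))
        (f 0, Fin.tail f) :=
      Acc.prod_gameAdd (hf 0) (IH (Fin.tail f) fun i => hf i.succ)
    refine Subrelation.accessible ?_
      (InvImage.accessible (fun g : Fin (n+1) → α => (g 0, Fin.tail g)) hacc)
    rintro g f' ⟨i, hri, hoth⟩
    induction i using Fin.cases with
    | zero =>
      have htail : Fin.tail g = Fin.tail f' :=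
        funext fun j => hoth j.succ (Fin.succ_ne_zero j)
      show Prod.GameAdd _ _ (g 0, Fin.tail g) (f' 0, Fin.tail f')
      rw [htail]
      exact Prod.GameAdd.fst hri
    | succ j =>
      have h0 : g 0 = f' 0 := hoth 0 (Ne.symm (Fin.succ_ne_zero j))
      show Prod.GameAdd _ _ (g 0, Fin.tail g) (f' 0, Fin.tail f')
      rw [h0]
      exact Prod.GameAdd.snd ⟨j, hri, fun k hk =>
        hoth k.succ (fun hc => hk (Fin.succ_injective n hc))⟩

lemma SN_app (f : Fn) (ss : Fin (far f) → ITerm F ar C Fn far G gar Fh gnum gtys nar)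
    (hss : ∀ i, Acc (fun t s => IStep DI s t) (ss i)) :
    Acc (fun t s : ITerm F ar C Fn far G gar Fh gnum gtys nar => IStep DI s t)
      (ITerm.app f ss) := by
  have h2 := acc_tuple (r := fun t s => IStep DI s t) ss hss
  clear hss
  induction h2 with
  | intro x _ ih =>
    refine Acc.intro _ fun t' hstep => ?_
    obtain ⟨ss', i, rfl, hi, hoth⟩ := inv_app hstep
    exact ih ss' ⟨i, hi, fun j hj => (hoth j hj).symm⟩

lemma SN_instC {C' : Type} {G' : Type} {gar' : G' → ℕ}
    (cmap : C' → ITerm F ar C Fn far G gar Fh gnum gtys nar)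
    (ren : G' → G) (hren : ∀ x, gar (ren x) = gar' x) (σn : ℕ → NTerm F ar)
    (body : ITerm F ar C' Fn far G' gar' Fh gnum gtys nar)
    (hc : ∀ c, body.IHasConst c → Acc (fun t s => IStep DI s t) (cmap c))
    (hd : ∀ h', body.IHasIDef h' → ∀ (Xs : Fin (gnum h') → G)
      (hty : ∀ i, gar (Xs i) = gtys h' i) (ns : Fin (nar h' + 1) → NTerm F ar),
      Acc (fun t s => IStep DI s t) (ITerm.defd h' Xs hty ns)) :
    Acc (fun t s : ITerm F ar C Fn far G gar Fh gnum gtys nar => IStep DI s t)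
      (body.instC cmap ren hren σn) := by
  induction body with
  | const c => exact hc c rfl
  | vterm X ns => exact Acc.intro _ fun y hy => absurd hy not_step_vterm
  | app g ss ih =>
    exact SN_app g _ fun i =>
      ih i (fun c hcc => hc c ⟨i, hcc⟩) (fun h' hh' => hd h' ⟨i, hh'⟩)
  | defd h' Ys htyY ns => exact hd h' rfl _ _ _

lemma SN_defd {precI : Fh → Fh → Prop} (hwfI : WellFounded precI)
    (hDI : GoodIDefs precI DI) :
    ∀ (h : Fh) (Xs : Fin (gnum h) → G) (hty : ∀ i, gar (Xs i) = gtys h i)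
      (ns : Fin (nar h + 1) → NTerm F ar),
      Acc (fun t s : ITerm F ar C Fn far G gar Fh gnum gtys nar => IStep DI s t)
        (ITerm.defd h Xs hty ns) := by
  intro h
  refine hwfI.induction
    (C := fun h => ∀ (Xs : Fin (gnum h) → G) (hty : ∀ i, gar (Xs i) = gtys h i)
      (ns : Fin (nar h + 1) → NTerm F ar),
      Acc (fun t s : ITerm F ar C Fn far G gar Fh gnum gtys nar => IStep DI s t)
        (ITerm.defd h Xs hty ns)) h ?_
  clear h
  intro h IH1
  suffices H : ∀ (k : ℕ) (Xs : Fin (gnum h) → G) (hty : ∀ i, gar (Xs i) = gtys h i)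
      (ns : Fin (nar h + 1) → NTerm F ar), (ns (Fin.last _)).nsize < k →
      Acc (fun t s : ITerm F ar C Fn far G gar Fh gnum gtys nar => IStep DI s t)
        (ITerm.defd h Xs hty ns) by
    intro Xs hty ns
    exact H ((ns (Fin.last _)).nsize + 1) Xs hty ns (Nat.lt_succ_self _)
  intro k
  induction k with
  | zero => intro _ _ _ hlt; omega
  | succ k IH2 =>
    intro Xs hty ns hlt
    refine Acc.intro _ fun t' hstep => ?_
    rcases inv_defd hstep with ⟨ts, hns, rfl⟩ | ⟨ts, u, hns, rfl⟩
    · refine SN_instC _ _ _ _ _ ?_ ?_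
      · rintro (_ | c₀) hcc
        · exact absurd hcc (hDI.base_noY h)
        · exact Acc.intro _ fun y hy => absurd hy not_step_const
      · intro h' hh' Xs' hty' ns'
        exact IH1 h' (hDI.base_symbs h h' hh') Xs' hty' ns'
    · refine SN_instC _ _ _ _ _ ?_ ?_
      · rintro (_ | c₀) hcc
        · show Acc _ (ITerm.defd h Xs hty (Fin.snoc ts u))
          refine IH2 Xs hty (Fin.snoc ts u) ?_
          subst hns
          simp only [Fin.snoc_last] at hlt ⊢
          simpa [NTerm.nsize] using Nat.lt_of_succ_lt_succ hlt
        · exact Acc.intro _ fun y hy => absurd hy not_step_const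
      · intro h' hh' Xs' hty' ns'
        exact IH1 h' (hDI.step_symbs h h' hh') Xs' hty' ns'

lemma SN_all {precI : Fh → Fh → Prop} (hwfI : WellFounded precI)
    (hDI : GoodIDefs precI DI) (t : ITerm F ar C Fn far G gar Fh gnum gtys nar) :
    Acc (fun t s : ITerm F ar C Fn far G gar Fh gnum gtys nar => IStep DI s t) t := by
  induction t with
  | const c => exact Acc.intro _ fun y hy => absurd hy not_step_const
  | vterm X ns => exact Acc.intro _ fun y hy => absurd hy not_step_vterm
  | app f ss ih => exact SN_app f ss ih
  | defd h Xs hty ns => exact SN_defd hwfI hDI h Xs hty ns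

/-! ### Confluence -/

lemma diamond : ∀ (a b c : ITerm F ar C Fn far G gar Fh gnum gtys nar),
    IStep DI a b → IStep DI a c → b = c ∨ ∃ d, IStep DI b d ∧ IStep DI c d := by
  intro a
  induction a with
  | const c => intro b c hab _; exact absurd hab not_step_const
  | vterm X ns => intro b c hab _; exact absurd hab not_step_vterm
  | defd h Xs hty ns =>
    intro b c hab hac
    rcases inv_defd hab with ⟨ts, hns, rfl⟩ | ⟨ts, u, hns, rfl⟩ <;>
      rcases inv_defd hac with ⟨ts', hns', rfl⟩ | ⟨ts', u', hns', rfl⟩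
    · obtain ⟨hts, -⟩ := snoc_inj (hns.symm.trans hns')
      subst hts
      exact Or.inl rfl
    · obtain ⟨-, hx⟩ := snoc_inj (hns.symm.trans hns')
      simp at hx
    · obtain ⟨-, hx⟩ := snoc_inj (hns.symm.trans hns')
      simp at hx
    · obtain ⟨hts, hx⟩ := snoc_inj (hns.symm.trans hns')
      subst hts
      obtain rfl : u = u' := by injection hx
      exact Or.inl rfl
  | app f ss ih =>
    intro b c hab hac
    obtain ⟨sb, i, rfl, hbi, hbo⟩ := inv_app hab
    obtain ⟨sc, i', rfl, hci, hco⟩ := inv_app hac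
    by_cases hii : i = i'
    · subst hii
      rcases ih i _ _ hbi hci with heq | ⟨d0, hbd, hcd⟩
      · refine Or.inl (congrArg _ (funext fun j => ?_))
        by_cases hj : j = i
        · subst hj; exact heq
        · exact (hbo j hj).symm.trans (hco j hj)
      · refine Or.inr ⟨ITerm.app f (Function.update sb i d0), ?_, ?_⟩
        · refine IStep.appCong f sb _ i ?_ ?_
          · simpa using hbd
          · intro j hj; simp [Function.update_of_ne hj]
        · have hupd : Function.update sb i d0 = Function.update sc i d0 := by
            funext j
            by_cases hj : j = i
            · subst hj; simp
            · simp [Function.update_of_ne hj, (hbo j hj).symm.trans (hco j hj)]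
          rw [hupd]
          refine IStep.appCong f sc _ i ?_ ?_
          · simpa using hcd
          · intro j hj; simp [Function.update_of_ne hj]
    · set sd := Function.update (Function.update ss i (sb i)) i' (sc i') with hsd
      refine Or.inr ⟨ITerm.app f sd, ?_, ?_⟩
      · refine IStep.appCong f sb sd i' ?_ ?_
        · have h1 : sb i' = ss i' := (hbo i' (fun hc => hii hc.symm)).symm
          have h2 : sd i' = sc i' := by simp [hsd]
          rw [h1, h2]; exact hci
        · intro j hj
          by_cases hji : j = i
          · subst hji
            simp [hsd, Function.update_of_ne hj, Function.update_self]
          · simp [hsd, Function.update_of_ne hj, Function.update_of_ne hji,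
              (hbo j hji).symm]
      · refine IStep.appCong f sc sd i ?_ ?_
        · have h1 : sc i = ss i := (hco i hii).symm
          have h2 : sd i = sb i := by
            simp [hsd, Function.update_of_ne hii, Function.update_self]
          rw [h1, h2]; exact hbi
        · intro j hj
          by_cases hji : j = i'
          · rw [hji]
            simp [hsd]
          · simp [hsd, Function.update_of_ne hji, Function.update_of_ne hj,
              (hco j hji).symm]

end Aux

end Schematic

/-- The rewrite system `R(F̂_ι)`, obtained by orienting the defining equations
of the defined individual function symbols from left to right, is canonical: the rewrite
relation `→_ι` is terminating (strongly normalizing) and confluent on the individual terms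
`T^ι`. -/
theorem statement2 (F : Type) (ar : F → ℕ) (prec : F → F → Prop)
    (hirr : ∀ f, ¬ prec f f) (htrans : Transitive prec) (hwf : WellFounded prec)
    (D : NumDefs F ar) (hD : GoodNumDefs prec D)
    (C Fn : Type) (far : Fn → ℕ) (G : Type) (gar : G → ℕ)
    (Fh : Type) (gnum : Fh → ℕ) (gtys : (h : Fh) → Fin (gnum h) → ℕ) (nar : Fh → ℕ)
    (precI : Fh → Fh → Prop)
    (hirrI : ∀ h, ¬ precI h h) (htransI : Transitive precI) (hwfI : WellFounded precI)
    (DI : IDefs F ar C Fn far Fh gnum gtys nar) (hDI : GoodIDefs precI DI) :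
    WellFounded (fun t s : ITerm F ar C Fn far G gar Fh gnum gtys nar => IStep DI s t) ∧
      ∀ a b c : ITerm F ar C Fn far G gar Fh gnum gtys nar,
        Relation.ReflTransGen (IStep DI) a b → Relation.ReflTransGen (IStep DI) a c →
        ∃ d, Relation.ReflTransGen (IStep DI) b d ∧ Relation.ReflTransGen (IStep DI) c d := by
  constructor
  · exact WellFounded.intro fun t => Schematic.SN_all hwfI hDI t
  · have hdia : ∀ a b c : ITerm F ar C Fn far G gar Fh gnum gtys nar,
        IStep DI a b → IStep DI a c →
        ∃ d, Relation.ReflGen (IStep DI) b d ∧ Relation.ReflTransGen (IStep DI) c d := by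
      intro a b c hab hac
      rcases Schematic.diamond a b c hab hac with rfl | ⟨d, hbd, hcd⟩
      · exact ⟨b, Relation.ReflGen.refl, Relation.ReflTransGen.refl⟩
      · exact ⟨d, Relation.ReflGen.single hbd, Relation.ReflTransGen.single hcd⟩
    intro a b c h1 h2
    exact Relation.church_rosser hdia h1 h2
end

section
/- For every individual term t ∈ T^ι and every parameter assignment σ, the evaluation σ(t)↓_ι lies in T^ι₀, i.e., it is an ordinary first-order term containing no defined symbols and no parameters. -/
namespace Schematic

variable {F : Type} {ar : F → ℕ} {C : Type} {Fn : Type} {far : Fn → ℕ}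
  {G : Type} {gar : G → ℕ} {Fh : Type} {gnum : Fh → ℕ}
  {gtys : (h : Fh) → Fin (gnum h) → ℕ} {nar : Fh → ℕ}

/-- Application of a parameter substitution to all numeric positions of an `ι`-term. -/
def ITerm.substParams (σn : ℕ → NTerm F ar) :
    ITerm F ar C Fn far G gar Fh gnum gtys nar → ITerm F ar C Fn far G gar Fh gnum gtys nar
  | .const c => .const c
  | .vterm X ns => .vterm X fun j => (ns j).subst σn
  | .app f ss => .app f fun j => (ss j).substParams σn
  | .defd h Xs hty ns => .defd h Xs hty fun j => (ns j).subst σn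

/-- The combination of the rewrite relations `→_ω` (applied inside the numeric positions of an
`ι`-term) and `→_ι`, used to evaluate `ι`-terms. -/
inductive CStep (D : NumDefs F ar) (DI : IDefs F ar C Fn far Fh gnum gtys nar) :
    ITerm F ar C Fn far G gar Fh gnum gtys nar →
    ITerm F ar C Fn far G gar Fh gnum gtys nar → Prop where
  | ofIStep {t t' : ITerm F ar C Fn far G gar Fh gnum gtys nar} :
      IStep DI t t' → CStep D DI t t'
  | vtermArg (X : G) (ns ns' : Fin (gar X) → NTerm F ar) (i : Fin (gar X)) :
      NStep D (ns i) (ns' i) → (∀ j, j ≠ i → ns j = ns' j) →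
      CStep D DI (ITerm.vterm X ns) (ITerm.vterm X ns')
  | defdArg (h : Fh) (Xs : Fin (gnum h) → G) (hty : ∀ i, gar (Xs i) = gtys h i)
      (ns ns' : Fin (nar h + 1) → NTerm F ar) (i : Fin (nar h + 1)) :
      NStep D (ns i) (ns' i) → (∀ j, j ≠ i → ns j = ns' j) →
      CStep D DI (ITerm.defd h Xs hty ns) (ITerm.defd h Xs hty ns')
  | appCong (f : Fn) (ss ss' : Fin (far f) → ITerm F ar C Fn far G gar Fh gnum gtys nar)
      (i : Fin (far f)) :
      CStep D DI (ss i) (ss' i) → (∀ j, j ≠ i → ss j = ss' j) →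
      CStep D DI (ITerm.app f ss) (ITerm.app f ss')

/-- Membership in `T^ι₀`: an ordinary first-order term, containing no defined symbols and no
parameters (all numeric arguments are numerals). -/
def ITerm.IsT0 : ITerm F ar C Fn far G gar Fh gnum gtys nar → Prop
  | .const _ => True
  | .vterm _ ns => ∀ j, (ns j).IsNumeral
  | .app _ ss => ∀ j, (ss j).IsT0
  | .defd _ _ _ _ => False

end Schematic

/-!
Every defined symbol, numeric or individual, applied to numerals reduces to a closed normal
term: by well-founded induction on the order of the symbols, and for a fixed symbol by induction
on the numeral in the recursion position, since one rewrite step turns `f̂(ν⃗, 0̄)` resp.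
`f̂(ν⃗, s(μ))` into an instance of a body that mentions only smaller symbols, numerals and (for
the step equation) the value of `f̂(ν⃗, μ)`. A structural induction on `t` then evaluates
`σ(t)`. The value is in `T^ι₀` and hence normal: every redex contains a defined symbol or
a numeric argument that is not a numeral.
-/

open Relation

theorem reflTransGen_tuple_congr {ι α β : Type*} [Fintype ι] [DecidableEq ι]
    {r : α → α → Prop} {s : β → β → Prop} (F : (ι → α) → β)
    (hF : ∀ (xs ys : ι → α) (i : ι), r (xs i) (ys i) → (∀ j, j ≠ i → xs j = ys j) →
      s (F xs) (F ys))
    {xs ys : ι → α} (h : ∀ i, ReflTransGen r (xs i) (ys i)) :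
    ReflTransGen s (F xs) (F ys) := by
  have congr_at : ∀ (zs : ι → α) (i : ι) {a b : α}, ReflTransGen r a b →
      ReflTransGen s (F (Function.update zs i a)) (F (Function.update zs i b)) :=
    fun zs i _ _ hab => hab.lift (fun a => F (Function.update zs i a)) fun a b hr =>
      hF _ _ i (by simpa using hr) fun j hj => by simp [Function.update_of_ne hj]
  have partial_congr : ∀ t : Finset ι, ReflTransGen s (F xs) (F (t.piecewise ys xs)) := by
    intro t
    induction t using Finset.induction_on with
    | empty => simpa using ReflTransGen.refl
    | insert j t hj ih =>
      rw [Finset.piecewise_insert]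
      have hstep := congr_at (t.piecewise ys xs) j (h j)
      rw [Function.update_eq_self_iff.mpr (Finset.piecewise_eq_of_notMem _ _ _ hj).symm] at hstep
      exact ih.trans hstep
  simpa using partial_congr Finset.univ

namespace Schematic

variable {F : Type} {ar : F → ℕ}

theorem NTerm.isNumeral_ofNat : ∀ m, (NTerm.ofNat F ar m).IsNumeral
  | 0 => trivial
  | m + 1 => isNumeral_ofNat m

variable {D : NumDefs F ar}

theorem NStep.not_isNumeral {t t' : NTerm F ar} (h : NStep D t t') : ¬ t.IsNumeral := by
  induction h with
  | succCong _ ih => exact ih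
  | _ => exact id

variable (D) in
def NTerm.ReducesToNumeral (t : NTerm F ar) : Prop :=
  ∃ m, ReflTransGen (NStep D) t (NTerm.ofNat F ar m)

namespace NTerm

variable (D) in
theorem reducesToNumeral_ofNat (m : ℕ) : (ofNat F ar m).ReducesToNumeral D := ⟨m, .refl⟩

theorem ReducesToNumeral.head {t t' : NTerm F ar} (h : NStep D t t')
    (ht' : t'.ReducesToNumeral D) : t.ReducesToNumeral D :=
  ht'.imp fun _ hm => .head h hm

theorem ReducesToNumeral.succ {t : NTerm F ar} (ht : t.ReducesToNumeral D) :
    (succ t).ReducesToNumeral D :=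
  let ⟨m, hm⟩ := ht
  ⟨m + 1, hm.lift NTerm.succ fun _ _ => NStep.succCong⟩

end NTerm

open NTerm

variable (D) in
def NumSymbNormalizes (f : F) : Prop :=
  ∀ ks : Fin (ar f + 1) → ℕ, (defd f fun i => ofNat F ar (ks i)).ReducesToNumeral D

theorem reducesToNumeral_defd {f : F} {ts : Fin (ar f + 1) → NTerm F ar}
    (hf : NumSymbNormalizes D f) (hts : ∀ i, (ts i).ReducesToNumeral D) :
    (defd f ts).ReducesToNumeral D := by
  choose ks hks using hts
  obtain ⟨m, hm⟩ := hf ks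
  exact ⟨m, (reflTransGen_tuple_congr (defd f) (NStep.argCong f) hks).trans hm⟩

theorem reducesToNumeral_subst (t : NTerm F ar) (σn : ℕ → NTerm F ar)
    (hp : ∀ n, t.HasParam n → (σn n).ReducesToNumeral D)
    (hs : ∀ g, t.HasSymb g → NumSymbNormalizes D g) :
    (t.subst σn).ReducesToNumeral D := by
  induction t with
  | zero => exact reducesToNumeral_ofNat D 0
  | param n => exact hp n rfl
  | succ t ih => exact (ih hp hs).succ
  | defd f ts ih =>
    exact reducesToNumeral_defd (hs f (.inl rfl)) fun i =>
      ih i (fun n hn => hp n ⟨i, hn⟩) fun g hg => hs g (.inr ⟨i, hg⟩)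

section Substitutions

variable {k n : ℕ} {ts : Fin k → NTerm F ar} (hts : ∀ i, (ts i).ReducesToNumeral D)
  {u : NTerm F ar} (hu : u.ReducesToNumeral D)
include hts

theorem reducesToNumeral_cutSub (hn : n < k) : (cutSub k ts n).ReducesToNumeral D := by
  rw [cutSub, dif_pos hn]
  exact hts _

include hu

theorem reducesToNumeral_cutSub2 (hn : n < k + 1) :
    (cutSub2 k ts u n).ReducesToNumeral D := by
  unfold cutSub2
  split_ifs
  · exact hts _
  · exact hu
  · omega

theorem reducesToNumeral_stepSub {recc : NTerm F ar} (hrecc : recc.ReducesToNumeral D)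
    (hn : n < k + 2) : (stepSub k ts u recc n).ReducesToNumeral D := by
  unfold stepSub
  split_ifs
  · exact hts _
  · exact hu
  · exact hrecc
  · omega

end Substitutions

theorem numSymbNormalizes {prec : F → F → Prop} (hwf : WellFounded prec)
    (hD : GoodNumDefs prec D) (f : F) : NumSymbNormalizes D f := by
  induction f using hwf.induction with
  | _ f IH =>
  intro ks
  rw [← Fin.snoc_init_self fun i => ofNat F ar (ks i)]
  have hts : ∀ i, (Fin.init (fun i => ofNat F ar (ks i)) i).ReducesToNumeral D :=
    fun _ => reducesToNumeral_ofNat D _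
  generalize ks (Fin.last (ar f)) = k
  induction k with
  | zero =>
    refine ReducesToNumeral.head (NStep.baseRule f _) ?_
    exact reducesToNumeral_subst _ _
      (fun n hn => reducesToNumeral_cutSub hts (hD.base_params f n hn))
      fun g hg => IH g (hD.base_symbs f g hg)
  | succ k ihk =>
    refine ReducesToNumeral.head (NStep.stepRule f _ (ofNat F ar k)) ?_
    exact reducesToNumeral_subst _ _
      (fun n hn => reducesToNumeral_stepSub hts (reducesToNumeral_ofNat D k) ihk
        (hD.step_params f n hn))
      fun g hg => IH g (hD.step_symbs f g hg)

variable {C : Type} {Fn : Type} {far : Fn → ℕ}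
  {G : Type} {gar : G → ℕ} {Fh : Type} {gnum : Fh → ℕ}
  {gtys : (h : Fh) → Fin (gnum h) → ℕ} {nar : Fh → ℕ}
  {DI : IDefs F ar C Fn far Fh gnum gtys nar}

theorem IStep.not_isT0 {t t' : ITerm F ar C Fn far G gar Fh gnum gtys nar}
    (h : IStep DI t t') : ¬ t.IsT0 := by
  induction h with
  | appCong _ _ _ i _ _ ih => exact fun ht => ih (ht i)
  | _ => exact id

theorem CStep.not_isT0 {t t' : ITerm F ar C Fn far G gar Fh gnum gtys nar}
    (h : CStep D DI t t') : ¬ t.IsT0 := by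
  induction h with
  | ofIStep h => exact h.not_isT0
  | vtermArg _ _ _ i hi _ => exact fun ht => hi.not_isNumeral (ht i)
  | defdArg => exact id
  | appCong _ _ _ i _ _ ih => exact fun ht => ih (ht i)

variable (D DI) in
def ITerm.ReducesToT0 (t : ITerm F ar C Fn far G gar Fh gnum gtys nar) : Prop :=
  ∃ u, ReflTransGen (CStep D DI) t u ∧ u.IsT0

def ISymbNormalizes (D : NumDefs F ar) (DI : IDefs F ar C Fn far Fh gnum gtys nar) (G : Type)
    (gar : G → ℕ) (h : Fh) : Prop :=
  ∀ (Xs : Fin (gnum h) → G) (hty : ∀ i, gar (Xs i) = gtys h i) (ks : Fin (nar h + 1) → ℕ),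
    (ITerm.defd h Xs hty fun i => ofNat F ar (ks i)).ReducesToT0 D DI

namespace ITerm

theorem ReducesToT0.head {t t' : ITerm F ar C Fn far G gar Fh gnum gtys nar}
    (h : CStep D DI t t') (ht' : t'.ReducesToT0 D DI) : t.ReducesToT0 D DI :=
  ht'.imp fun _ hu => ⟨.head h hu.1, hu.2⟩

theorem reducesToT0_const (c : C) :
    (const c : ITerm F ar C Fn far G gar Fh gnum gtys nar).ReducesToT0 D DI :=
  ⟨_, .refl, trivial⟩

theorem reducesToT0_vterm (X : G) {ns : Fin (gar X) → NTerm F ar}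
    (hns : ∀ j, (ns j).ReducesToNumeral D) :
    (vterm X ns : ITerm F ar C Fn far G gar Fh gnum gtys nar).ReducesToT0 D DI := by
  choose ks hks using hns
  exact ⟨_, reflTransGen_tuple_congr (vterm X) (CStep.vtermArg X) hks,
    fun j => isNumeral_ofNat (ks j)⟩

theorem reducesToT0_app (f : Fn) {ss : Fin (far f) → ITerm F ar C Fn far G gar Fh gnum gtys nar}
    (hss : ∀ j, (ss j).ReducesToT0 D DI) : (app f ss).ReducesToT0 D DI := by
  choose us hus hT0 using hss
  exact ⟨app f us, reflTransGen_tuple_congr (app f) (CStep.appCong f) hus, hT0⟩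

theorem reducesToT0_defd {h : Fh} {Xs : Fin (gnum h) → G} {hty : ∀ i, gar (Xs i) = gtys h i}
    {ns : Fin (nar h + 1) → NTerm F ar} (hh : ISymbNormalizes D DI G gar h)
    (hns : ∀ j, (ns j).ReducesToNumeral D) : (defd h Xs hty ns).ReducesToT0 D DI := by
  choose ks hks using hns
  obtain ⟨u, hu, hT0⟩ := hh Xs hty ks
  exact ⟨u, (reflTransGen_tuple_congr (defd h Xs hty) (CStep.defdArg h Xs hty) hks).trans hu,
    hT0⟩

theorem reducesToT0_instC (hnum : ∀ f, NumSymbNormalizes D f) {C' G' : Type} {gar' : G' → ℕ}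
    (t : ITerm F ar C' Fn far G' gar' Fh gnum gtys nar)
    (cmap : C' → ITerm F ar C Fn far G gar Fh gnum gtys nar) (ren : G' → G)
    (hren : ∀ x, gar (ren x) = gar' x) (σn : ℕ → NTerm F ar)
    (hc : ∀ c, t.IHasConst c → (cmap c).ReducesToT0 D DI)
    (hp : ∀ n, t.IHasParam n → (σn n).ReducesToNumeral D)
    (hs : ∀ h, t.IHasIDef h → ISymbNormalizes D DI G gar h) :
    (t.instC cmap ren hren σn).ReducesToT0 D DI := by
  induction t with
  | const c => exact hc c rfl
  | vterm x ns =>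
    exact reducesToT0_vterm _ fun j =>
      reducesToNumeral_subst _ σn (fun n hn => hp n ⟨_, hn⟩) fun g _ => hnum g
  | app f ss ih =>
    exact reducesToT0_app f fun j =>
      ih j (fun c hc' => hc c ⟨j, hc'⟩) (fun n hn => hp n ⟨j, hn⟩) fun h hh => hs h ⟨j, hh⟩
  | defd h Ys hty ns =>
    exact reducesToT0_defd (hs h rfl) fun j =>
      reducesToNumeral_subst _ σn (fun n hn => hp n ⟨j, hn⟩) fun g _ => hnum g

theorem reducesToT0_instBody (hnum : ∀ f, NumSymbNormalizes D f) {h : Fh}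
    (Xs : Fin (gnum h) → G) (hty : ∀ i, gar (Xs i) = gtys h i) (σn : ℕ → NTerm F ar)
    {recv : ITerm F ar C Fn far G gar Fh gnum gtys nar}
    (body : ITerm F ar (Option C) Fn far (Fin (gnum h)) (gtys h) Fh gnum gtys nar)
    (hY : body.IHasConst none → recv.ReducesToT0 D DI)
    (hp : ∀ n, body.IHasParam n → (σn n).ReducesToNumeral D)
    (hs : ∀ h', body.IHasIDef h' → ISymbNormalizes D DI G gar h') :
    (instBody Xs hty σn recv body).ReducesToT0 D DI :=
  reducesToT0_instC hnum body _ Xs hty σn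
    (fun | none, hc => hY hc | some c, _ => reducesToT0_const c) hp hs

end ITerm

open ITerm

theorem iSymbNormalizes (hnum : ∀ f, NumSymbNormalizes D f) {precI : Fh → Fh → Prop}
    (hwfI : WellFounded precI) (hDI : GoodIDefs precI DI) (h : Fh) :
    ISymbNormalizes D DI G gar h := by
  induction h using hwfI.induction with
  | _ h IH =>
  intro Xs hty ks
  rw [← Fin.snoc_init_self fun i => ofNat F ar (ks i)]
  have hts : ∀ i, (Fin.init (fun i => ofNat F ar (ks i)) i).ReducesToNumeral D :=
    fun _ => reducesToNumeral_ofNat D _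
  generalize ks (Fin.last (nar h)) = k
  induction k with
  | zero =>
    refine ReducesToT0.head (.ofIStep (IStep.baseRule h Xs hty _)) ?_
    exact reducesToT0_instBody hnum Xs hty _ _ (fun hY => absurd hY (hDI.base_noY h))
      (fun n hn => reducesToNumeral_cutSub hts (hDI.base_params h n hn))
      fun h' hh => IH h' (hDI.base_symbs h h' hh)
  | succ k ihk =>
    refine ReducesToT0.head (.ofIStep (IStep.stepRule h Xs hty _ (ofNat F ar k))) ?_
    exact reducesToT0_instBody hnum Xs hty _ _ (fun _ => ihk)
      (fun n hn => reducesToNumeral_cutSub2 hts (reducesToNumeral_ofNat D k)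
        (hDI.step_params h n hn))
      fun h' hh => IH h' (hDI.step_symbs h h' hh)

theorem reducesToT0_substParams (hnum : ∀ f, NumSymbNormalizes D f)
    (hI : ∀ h, ISymbNormalizes D DI G gar h) (t : ITerm F ar C Fn far G gar Fh gnum gtys nar)
    {σn : ℕ → NTerm F ar} (hσn : ∀ n, (σn n).ReducesToNumeral D) :
    (t.substParams σn).ReducesToT0 D DI := by
  induction t with
  | const c => exact reducesToT0_const c
  | vterm X ns =>
    exact reducesToT0_vterm X fun j =>
      reducesToNumeral_subst _ σn (fun n _ => hσn n) fun g _ => hnum g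
  | app f ss ih => exact reducesToT0_app f ih
  | defd h Xs hty ns =>
    exact reducesToT0_defd (hI h) fun j =>
      reducesToNumeral_subst _ σn (fun n _ => hσn n) fun g _ => hnum g

end Schematic

open Schematic

theorem statement3_general (F : Type) (ar : F → ℕ) (prec : F → F → Prop)
    (hwf : WellFounded prec)
    (D : NumDefs F ar) (hD : GoodNumDefs prec D)
    (C Fn : Type) (far : Fn → ℕ) (G : Type) (gar : G → ℕ)
    (Fh : Type) (gnum : Fh → ℕ) (gtys : (h : Fh) → Fin (gnum h) → ℕ) (nar : Fh → ℕ)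
    (precI : Fh → Fh → Prop)
    (hwfI : WellFounded precI)
    (DI : IDefs F ar C Fn far Fh gnum gtys nar) (hDI : GoodIDefs precI DI)
    (t : ITerm F ar C Fn far G gar Fh gnum gtys nar) (σ : ℕ → ℕ) :
    ∃ u : ITerm F ar C Fn far G gar Fh gnum gtys nar,
      Relation.ReflTransGen (CStep D DI) (t.substParams fun n => NTerm.ofNat F ar (σ n)) u ∧
      (¬ ∃ v, CStep D DI u v) ∧ u.IsT0 := by
  have hnum := numSymbNormalizes hwf hD
  obtain ⟨u, hu, hT0⟩ := reducesToT0_substParams hnum (iSymbNormalizes hnum hwfI hDI) t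
    fun n => NTerm.reducesToNumeral_ofNat D (σ n)
  exact ⟨u, hu, fun ⟨_, hv⟩ => hv.not_isT0 hT0, hT0⟩

/-- For every individual term `t ∈ T^ι` and every parameter assignment `σ`, the
evaluation `σ(t)↓_ι` lies in `T^ι₀`: applying `σ` and normalizing under the combined rewriting
(`→_ω` inside numeric positions together with `→_ι`) yields a normal form which is an ordinary
first-order term, containing no defined symbols and no parameters. -/
theorem statement3 (F : Type) (ar : F → ℕ) (prec : F → F → Prop)
    (hirr : ∀ f, ¬ prec f f) (htrans : Transitive prec) (hwf : WellFounded prec)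
    (D : NumDefs F ar) (hD : GoodNumDefs prec D)
    (C Fn : Type) (far : Fn → ℕ) (G : Type) (gar : G → ℕ)
    (Fh : Type) (gnum : Fh → ℕ) (gtys : (h : Fh) → Fin (gnum h) → ℕ) (nar : Fh → ℕ)
    (precI : Fh → Fh → Prop)
    (hirrI : ∀ h, ¬ precI h h) (htransI : Transitive precI) (hwfI : WellFounded precI)
    (DI : IDefs F ar C Fn far Fh gnum gtys nar) (hDI : GoodIDefs precI DI)
    (t : ITerm F ar C Fn far G gar Fh gnum gtys nar) (σ : ℕ → ℕ) :
    ∃ u : ITerm F ar C Fn far G gar Fh gnum gtys nar,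
      Relation.ReflTransGen (CStep D DI) (t.substParams fun n => NTerm.ofNat F ar (σ n)) u ∧
      (¬ ∃ v, CStep D DI u v) ∧ u.IsT0 :=
  statement3_general F ar prec hwf D hD C Fn far G gar Fh gnum gtys nar precI hwfI DI hDI t σ
end

section
/- Let Θ₁ and Θ₂ be normal s-substitutions such that (Θ₁,Θ₂) is composable. Then for all parameter assignments σ, (Θ₁ ⋆ Θ₂)[σ] = Θ₁[σ] ∘ Θ₂[σ], i.e., the instantiation of the schematic composition equals the composition of the instantiated first-order substitutions. -/
namespace Schematic

variable {F : Type} {ar : F → ℕ}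

/-- Big-step evaluation of numeric terms under a parameter assignment `σ`, following the
defining equations `D(F̂_ω)`: `NEval D σ t β` means that `σ(t)` evaluates (normalizes under
`R(F̂_ω)`) to the numeral `β`. -/
inductive NEval (D : NumDefs F ar) (σ : ℕ → ℕ) : NTerm F ar → ℕ → Prop where
  | zero : NEval D σ NTerm.zero 0
  | param (n : ℕ) : NEval D σ (NTerm.param n) (σ n)
  | succ {t : NTerm F ar} {β : ℕ} : NEval D σ t β → NEval D σ (NTerm.succ t) (β + 1)
  | defdBase (f : F) (ts : Fin (ar f + 1) → NTerm F ar) (νs : Fin (ar f) → ℕ) {β : ℕ} :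
      (∀ i : Fin (ar f), NEval D σ (ts i.castSucc) (νs i)) →
      NEval D σ (ts (Fin.last (ar f))) 0 →
      NEval D σ ((D.base f).subst (cutSub (ar f) fun i => NTerm.ofNat F ar (νs i))) β →
      NEval D σ (NTerm.defd f ts) β
  | defdStep (f : F) (ts : Fin (ar f + 1) → NTerm F ar) (νs : Fin (ar f) → ℕ) (p : ℕ)
      {β : ℕ} :
      (∀ i : Fin (ar f), NEval D σ (ts i.castSucc) (νs i)) →
      NEval D σ (ts (Fin.last (ar f))) (p + 1) →
      NEval D σ ((D.step f).subst (stepSub (ar f) (fun i => NTerm.ofNat F ar (νs i))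
        (NTerm.ofNat F ar p)
        (NTerm.defd f (Fin.snoc (fun i => NTerm.ofNat F ar (νs i)) (NTerm.ofNat F ar p))))) β →
      NEval D σ (NTerm.defd f ts) β

end Schematic
namespace Schematic

variable {F : Type} {ar : F → ℕ} {C : Type} {Fn : Type} {far : Fn → ℕ}
  {G : Type} {gar : G → ℕ} {Fh : Type} {gnum : Fh → ℕ}
  {gtys : (h : Fh) → Fin (gnum h) → ℕ} {nar : Fh → ℕ}

/-- Individual variables `V^ι`: V-terms `X(ν⃗)` where `ν⃗` is a tuple of numerals. -/
structure IVar (G : Type) (gar : G → ℕ) where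
  X : G
  idx : Fin (gar X) → ℕ

/-- A pair `(X(s⃗), t)` of an s-substitution: a V-term over the global variable `X` with
argument tuple `s⃗` (terms of `T^ω₀`, i.e. without defined symbols) and a term `t ∈ T^ι`. -/
structure SPair (F : Type) (ar : F → ℕ) (C : Type) (Fn : Type) (far : Fn → ℕ)
    (G : Type) (gar : G → ℕ) (Fh : Type) (gnum : Fh → ℕ)
    (gtys : (h : Fh) → Fin (gnum h) → ℕ) (nar : Fh → ℕ) where
  X : G
  args : Fin (gar X) → NTerm F ar
  val : ITerm F ar C Fn far G gar Fh gnum gtys nar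

/-- The instantiated domain variable `X(σ(s⃗))` of a pair under a parameter assignment. -/
def SPair.dvar (σ : ℕ → ℕ) (p : SPair F ar C Fn far G gar Fh gnum gtys nar) : IVar G gar :=
  ⟨p.X, fun i => (p.args i).eval0 σ⟩

/-- `Θ` is an s-substitution: a finite set of pairs `(X(s⃗),t)` with `s⃗` a tuple of
`T^ω₀`-terms, such that for any two distinct pairs `(X(s⃗),t)` and `(Y(s⃗'),t')` either
`X ≠ Y` or the tuples `s⃗, s⃗'` are essentially distinct (their instantiations differ under
every parameter assignment). -/
def IsSSubst (Θ : Finset (SPair F ar C Fn far G gar Fh gnum gtys nar)) : Prop :=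
  (∀ p ∈ Θ, ∀ i, (p.args i).NoDefd) ∧
  ∀ p ∈ Θ, ∀ q ∈ Θ, p ≠ q →
    p.X ≠ q.X ∨ ∀ σ : ℕ → ℕ, p.dvar σ ≠ q.dvar σ

end Schematic
namespace Schematic

variable {F : Type} {ar : F → ℕ} {C : Type} {Fn : Type} {far : Fn → ℕ}
  {G : Type} {gar : G → ℕ} {Fh : Type} {gnum : Fh → ℕ}
  {gtys : (h : Fh) → Fin (gnum h) → ℕ} {nar : Fh → ℕ}

/-- Ordinary first-order terms (members of `T^ι₀`): built from individual variables (`IVar`),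
constants and function applications. -/
inductive FTerm (C : Type) (Fn : Type) (far : Fn → ℕ) (G : Type) (gar : G → ℕ) : Type where
  | var : IVar G gar → FTerm C Fn far G gar
  | const : C → FTerm C Fn far G gar
  | app : (f : Fn) → (Fin (far f) → FTerm C Fn far G gar) → FTerm C Fn far G gar

/-- The individual variable `v` occurs in the first-order term. -/
def FTerm.HasVar (v : IVar G gar) : FTerm C Fn far G gar → Prop
  | .var w => w = v
  | .const _ => False
  | .app _ ss => ∃ j, (ss j).HasVar v

/-- Big-step evaluation `t Θ[σ]` of an `ι`-term: the simultaneous application of the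
s-substitution `Θ` under the parameter assignment `σ` together with evaluation `↓_ι`
(Definition of `tΘ[σ]`).  With `Θ = ∅` this is the plain evaluation `σ(t)↓_ι`. -/
inductive SEval (D : NumDefs F ar) (DI : IDefs F ar C Fn far Fh gnum gtys nar) (σ : ℕ → ℕ) :
    Finset (SPair F ar C Fn far G gar Fh gnum gtys nar) →
    ITerm F ar C Fn far G gar Fh gnum gtys nar → FTerm C Fn far G gar → Prop where
  | const (Θ : Finset (SPair F ar C Fn far G gar Fh gnum gtys nar)) (c : C) :
      SEval D DI σ Θ (ITerm.const c) (FTerm.const c)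
  | vtermHit (Θ : Finset (SPair F ar C Fn far G gar Fh gnum gtys nar))
      (X : G) (ns : Fin (gar X) → NTerm F ar) (νs : Fin (gar X) → ℕ)
      (p : SPair F ar C Fn far G gar Fh gnum gtys nar) (u : FTerm C Fn far G gar) :
      (∀ i, NEval D σ (ns i) (νs i)) →
      p ∈ Θ → p.dvar σ = ⟨X, νs⟩ →
      SEval D DI σ ∅ p.val u →
      SEval D DI σ Θ (ITerm.vterm X ns) u
  | vtermMiss (Θ : Finset (SPair F ar C Fn far G gar Fh gnum gtys nar))
      (X : G) (ns : Fin (gar X) → NTerm F ar) (νs : Fin (gar X) → ℕ) :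
      (∀ i, NEval D σ (ns i) (νs i)) →
      (∀ p ∈ Θ, p.dvar σ ≠ (⟨X, νs⟩ : IVar G gar)) →
      SEval D DI σ Θ (ITerm.vterm X ns) (FTerm.var ⟨X, νs⟩)
  | app (Θ : Finset (SPair F ar C Fn far G gar Fh gnum gtys nar)) (f : Fn)
      (ss : Fin (far f) → ITerm F ar C Fn far G gar Fh gnum gtys nar)
      (us : Fin (far f) → FTerm C Fn far G gar) :
      (∀ j, SEval D DI σ Θ (ss j) (us j)) →
      SEval D DI σ Θ (ITerm.app f ss) (FTerm.app f us)
  | defdBase (Θ : Finset (SPair F ar C Fn far G gar Fh gnum gtys nar)) (h : Fh)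
      (Xs : Fin (gnum h) → G) (hty : ∀ i, gar (Xs i) = gtys h i)
      (ns : Fin (nar h + 1) → NTerm F ar) (νs : Fin (nar h) → ℕ) (u : FTerm C Fn far G gar) :
      (∀ i : Fin (nar h), NEval D σ (ns i.castSucc) (νs i)) →
      NEval D σ (ns (Fin.last (nar h))) 0 →
      SEval D DI σ Θ (instBody Xs hty (cutSub (nar h) fun i => NTerm.ofNat F ar (νs i))
        (ITerm.defd h Xs hty ns) (DI.base h)) u →
      SEval D DI σ Θ (ITerm.defd h Xs hty ns) u
  | defdStep (Θ : Finset (SPair F ar C Fn far G gar Fh gnum gtys nar)) (h : Fh)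
      (Xs : Fin (gnum h) → G) (hty : ∀ i, gar (Xs i) = gtys h i)
      (ns : Fin (nar h + 1) → NTerm F ar) (νs : Fin (nar h) → ℕ) (p : ℕ)
      (u : FTerm C Fn far G gar) :
      (∀ i : Fin (nar h), NEval D σ (ns i.castSucc) (νs i)) →
      NEval D σ (ns (Fin.last (nar h))) (p + 1) →
      SEval D DI σ Θ (instBody Xs hty
        (cutSub2 (nar h) (fun i => NTerm.ofNat F ar (νs i)) (NTerm.ofNat F ar p))
        (ITerm.defd h Xs hty (Fin.snoc (fun i => NTerm.ofNat F ar (νs i)) (NTerm.ofNat F ar p)))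
        (DI.step h)) u →
      SEval D DI σ Θ (ITerm.defd h Xs hty ns) u

/-- The s-substitution `Θ` is normal: for every parameter assignment `σ`, the domain of
`Θ[σ]` is disjoint from the individual variables occurring in the range of `Θ[σ]`. -/
def IsNormalS (D : NumDefs F ar) (DI : IDefs F ar C Fn far Fh gnum gtys nar)
    (Θ : Finset (SPair F ar C Fn far G gar Fh gnum gtys nar)) : Prop :=
  ∀ σ : ℕ → ℕ, ∀ p ∈ Θ, ∀ q ∈ Θ, ∀ u, SEval D DI σ ∅ q.val u → ¬ u.HasVar (p.dvar σ)

/-- The pair `(Θ₁, Θ₂)` is composable: for all parameter assignments `σ`,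
`dom(Θ₁[σ]) ∩ dom(Θ₂[σ]) = ∅` and `dom(Θ₁[σ]) ∩ V^ι(rg(Θ₂[σ])) = ∅`. -/
def ComposableS (D : NumDefs F ar) (DI : IDefs F ar C Fn far Fh gnum gtys nar)
    (Θ₁ Θ₂ : Finset (SPair F ar C Fn far G gar Fh gnum gtys nar)) : Prop :=
  ∀ σ : ℕ → ℕ,
    (∀ p ∈ Θ₁, ∀ q ∈ Θ₂, p.dvar σ ≠ q.dvar σ) ∧
    (∀ p ∈ Θ₁, ∀ q ∈ Θ₂, ∀ u, SEval D DI σ ∅ q.val u → ¬ u.HasVar (p.dvar σ))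

end Schematic
namespace Schematic

variable {F : Type} {ar : F → ℕ} {C : Type} {Fn : Type} {far : Fn → ℕ}
  {G : Type} {gar : G → ℕ} {Fh : Type} {gnum : Fh → ℕ}
  {gtys : (h : Fh) → Fin (gnum h) → ℕ} {nar : Fh → ℕ}

/-- Application of a first-order substitution (a map on individual variables) to a
first-order term. -/
def FTerm.applyF (θ : IVar G gar → FTerm C Fn far G gar) :
    FTerm C Fn far G gar → FTerm C Fn far G gar
  | .var v => θ v
  | .const c => .const c
  | .app f ss => .app f fun j => (ss j).applyF θ

open Classical in
/-- The first-order substitution `Θ[σ]` as a total map on individual variables: a domain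
variable `X(σ(s⃗))` of a pair `(X(s⃗),t) ∈ Θ` is sent to the evaluation `σ(t)↓_ι`, and all
other variables are fixed. -/
noncomputable def instSSub (D : NumDefs F ar) (DI : IDefs F ar C Fn far Fh gnum gtys nar)
    (Θ : Finset (SPair F ar C Fn far G gar Fh gnum gtys nar)) (σ : ℕ → ℕ)
    (v : IVar G gar) : FTerm C Fn far G gar :=
  if h : ∃ p, p ∈ Θ ∧ SPair.dvar σ p = v ∧ ∃ u, SEval D DI σ ∅ p.val u
  then h.choose_spec.2.2.choose
  else FTerm.var v

open Classical in
/-- The first-order substitution `(Θ₁ ⋆ Θ₂)[σ]` as a total map on individual variables: the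
composition `Θ₁ ⋆ Θ₂` consists of the pairs `(Xᵢ(s⃗ᵢ), tᵢΘ₂)` for `(Xᵢ(s⃗ᵢ), tᵢ) ∈ Θ₁`
together with the pairs of `Θ₂`; accordingly a domain variable of `Θ₁` is sent to
`tᵢΘ₂[σ]` (the application of `Θ₂` under `σ`, simultaneously evaluated), and the remaining
variables are treated by `Θ₂[σ]`. -/
noncomputable def instStar (D : NumDefs F ar) (DI : IDefs F ar C Fn far Fh gnum gtys nar)
    (Θ₁ Θ₂ : Finset (SPair F ar C Fn far G gar Fh gnum gtys nar)) (σ : ℕ → ℕ)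
    (v : IVar G gar) : FTerm C Fn far G gar :=
  if h : ∃ p, p ∈ Θ₁ ∧ SPair.dvar σ p = v ∧ ∃ u, SEval D DI σ Θ₂ p.val u
  then h.choose_spec.2.2.choose
  else instSSub D DI Θ₂ σ v

end Schematic

namespace Schematic

section Aux

variable {F : Type} {ar : F → ℕ} {C : Type} {Fn : Type} {far : Fn → ℕ}
  {G : Type} {gar : G → ℕ} {Fh : Type} {gnum : Fh → ℕ}
  {gtys : (h : Fh) → Fin (gnum h) → ℕ} {nar : Fh → ℕ}

variable {D : NumDefs F ar} {σ : ℕ → ℕ}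

theorem neval_ofNat (ν : ℕ) : NEval D σ (NTerm.ofNat F ar ν) ν := by
  induction ν with
  | zero => exact NEval.zero
  | succ n ih => exact NEval.succ ih

theorem neval_det {t : NTerm F ar} {β : ℕ} (h : NEval D σ t β) :
    ∀ {β'}, NEval D σ t β' → β = β' := by
  induction h with
  | zero => intro β' h'; cases h'; rfl
  | param n => intro β' h'; cases h'; rfl
  | succ _ ih => intro β' h'; cases h' with
    | succ h'' => exact congrArg (· + 1) (ih h'')
  | defdBase f ts νs hargs hlast hbody ihargs ihlast ihbody =>
    intro β' h'
    cases h' with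
    | defdBase _ _ νs' hargs' hlast' hbody' =>
      have hν : νs = νs' := funext fun i => ihargs i (hargs' i)
      subst hν
      exact ihbody hbody'
    | defdStep _ _ νs' p' hargs' hlast' hbody' =>
      exact absurd (ihlast hlast') (by simp)
  | defdStep f ts νs p hargs hlast hbody ihargs ihlast ihbody =>
    intro β' h'
    cases h' with
    | defdBase _ _ νs' hargs' hlast' hbody' =>
      exact absurd (ihlast hlast') (by simp)
    | defdStep _ _ νs' p' hargs' hlast' hbody' =>
      have hν : νs = νs' := funext fun i => ihargs i (hargs' i)
      have hp : p = p' := by have := ihlast hlast'; omega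
      subst hν; subst hp
      exact ihbody hbody'

theorem neval_ofNat_eq {ν β : ℕ} (h : NEval D σ (NTerm.ofNat F ar ν) β) : β = ν :=
  neval_det h (neval_ofNat ν)

/-- `g` is "handled": all numeral applications of `g` evaluate. -/
def HandledN (D : NumDefs F ar) (σ : ℕ → ℕ) (g : F) : Prop :=
  ∀ (νs : Fin (ar g) → ℕ) (m : ℕ), ∃ β, NEval D σ
    (NTerm.defd g (Fin.snoc (fun i => NTerm.ofNat F ar (νs i)) (NTerm.ofNat F ar m))) β

theorem defd_total_of_handled {g : F} (hg : HandledN D σ g)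
    {ts : Fin (ar g + 1) → NTerm F ar} {νs : Fin (ar g) → ℕ} {m : ℕ}
    (hargs : ∀ i : Fin (ar g), NEval D σ (ts i.castSucc) (νs i))
    (hlast : NEval D σ (ts (Fin.last (ar g))) m) :
    ∃ β, NEval D σ (NTerm.defd g ts) β := by
  obtain ⟨β, hβ⟩ := hg νs m
  cases hβ with
  | defdBase _ _ νs' hargs' hlast' hbody =>
    have hν : νs' = νs := by
      funext i
      have := hargs' i
      rw [Fin.snoc_castSucc] at this
      exact neval_ofNat_eq this
    have hm : m = 0 := by
      have := hlast'
      rw [Fin.snoc_last] at this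
      have := neval_ofNat_eq this
      omega
    rw [hν] at hbody
    exact ⟨β, NEval.defdBase g ts νs hargs (hm ▸ hlast) hbody⟩
  | defdStep _ _ νs' p hargs' hlast' hbody =>
    have hν : νs' = νs := by
      funext i
      have := hargs' i
      rw [Fin.snoc_castSucc] at this
      exact neval_ofNat_eq this
    have hm : m = p + 1 := by
      have := hlast'
      rw [Fin.snoc_last] at this
      exact (neval_ofNat_eq this).symm
    rw [hν] at hbody
    exact ⟨β, NEval.defdStep g ts νs p hargs (hm ▸ hlast) hbody⟩

theorem subst_total {t₀ : NTerm F ar} (hsymb : ∀ g, t₀.HasSymb g → HandledN D σ g)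
    {τ : ℕ → NTerm F ar} (hτ : ∀ n, ∃ β, NEval D σ (τ n) β) :
    ∃ β, NEval D σ (t₀.subst τ) β := by
  induction t₀ with
  | zero => exact ⟨0, NEval.zero⟩
  | param n => exact hτ n
  | succ t ih =>
    obtain ⟨β, hβ⟩ := ih hsymb
    exact ⟨β + 1, NEval.succ hβ⟩
  | defd f ts ih =>
    have hargs : ∀ i, ∃ β, NEval D σ ((ts i).subst τ) β := fun i =>
      ih i (fun g hgo => hsymb g (Or.inr ⟨i, hgo⟩)) 
    choose ν hν using hargs
    exact defd_total_of_handled (hsymb f (Or.inl rfl))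
      (ts := fun i => (ts i).subst τ) (νs := fun i => ν i.castSucc)
      (fun i => hν i.castSucc) (hν (Fin.last (ar f)))

theorem handledN_all {prec : F → F → Prop} (hwf : WellFounded prec)
    (hD : GoodNumDefs prec D) (f : F) : HandledN D σ f := by
  induction f using hwf.induction with
  | _ f ihf =>
  intro νs m
  induction m with
  | zero =>
    obtain ⟨β, hb⟩ := subst_total (t₀ := D.base f)
      (fun g hg => ihf g (hD.base_symbs f g hg))
      (τ := cutSub (ar f) fun i => NTerm.ofNat F ar (νs i)) (fun n => by
        unfold cutSub
        split
        · exact ⟨_, neval_ofNat _⟩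
        · exact ⟨_, NEval.param n⟩)
    refine ⟨β, NEval.defdBase f _ νs (fun i => ?_) ?_ hb⟩
    · rw [Fin.snoc_castSucc]; exact neval_ofNat _
    · rw [Fin.snoc_last]; exact neval_ofNat 0
  | succ m ihm =>
    obtain ⟨δ, hδ⟩ := ihm
    obtain ⟨β, hb⟩ := subst_total (t₀ := D.step f)
      (fun g hg => ihf g (hD.step_symbs f g hg))
      (τ := stepSub (ar f) (fun i => NTerm.ofNat F ar (νs i)) (NTerm.ofNat F ar m)
        (NTerm.defd f (Fin.snoc (fun i => NTerm.ofNat F ar (νs i)) (NTerm.ofNat F ar m))))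
      (fun n => by
        unfold stepSub
        split
        · exact ⟨_, neval_ofNat _⟩
        · split
          · exact ⟨_, neval_ofNat _⟩
          · split
            · exact ⟨δ, hδ⟩
            · exact ⟨_, NEval.param n⟩)
    refine ⟨β, NEval.defdStep f _ νs m (fun i => ?_) ?_ hb⟩
    · rw [Fin.snoc_castSucc]; exact neval_ofNat _
    · rw [Fin.snoc_last]; exact neval_ofNat (m + 1)

theorem neval_total {prec : F → F → Prop} (hwf : WellFounded prec)
    (hD : GoodNumDefs prec D) (t : NTerm F ar) : ∃ β, NEval D σ t β := by
  induction t with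
  | zero => exact ⟨0, NEval.zero⟩
  | param n => exact ⟨σ n, NEval.param n⟩
  | succ t ih => obtain ⟨β, hβ⟩ := ih; exact ⟨β + 1, NEval.succ hβ⟩
  | defd f ts ih =>
    choose ν hν using ih
    exact defd_total_of_handled (handledN_all hwf hD f)
      (νs := fun i => ν i.castSucc) (fun i => hν i.castSucc) (hν (Fin.last (ar f)))

variable {DI : IDefs F ar C Fn far Fh gnum gtys nar}

theorem isSSubst_empty : IsSSubst (∅ : Finset (SPair F ar C Fn far G gar Fh gnum gtys nar)) :=
  ⟨fun p hp => absurd hp (Finset.notMem_empty p),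
   fun p hp => absurd hp (Finset.notMem_empty p)⟩

theorem spair_eq_of {Θ : Finset (SPair F ar C Fn far G gar Fh gnum gtys nar)}
    (hΘ : IsSSubst Θ) {p q : SPair F ar C Fn far G gar Fh gnum gtys nar}
    (hp : p ∈ Θ) (hq : q ∈ Θ) (h : SPair.dvar σ p = SPair.dvar σ q) : p = q := by
  by_contra hne
  rcases hΘ.2 p hp q hq hne with hX | hd
  · exact hX (congrArg IVar.X h)
  · exact hd σ h

theorem seval_det {Θ : Finset (SPair F ar C Fn far G gar Fh gnum gtys nar)}
    {t : ITerm F ar C Fn far G gar Fh gnum gtys nar} {u : FTerm C Fn far G gar}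
    (h : SEval D DI σ Θ t u) :
    IsSSubst Θ → ∀ {u'}, SEval D DI σ Θ t u' → u = u' := by
  induction h with
  | const Θ c => intro _ u' h'; cases h'; rfl
  | vtermHit Θ X ns νs p u hν hp hdv hval ihval =>
    intro hΘ u' h'
    cases h' with
    | vtermHit _ _ _ νs' q u' hν' hq hdv' hval' =>
      have hνeq : νs = νs' := funext fun i => neval_det (hν i) (hν' i)
      subst hνeq
      have hpq : p = q := spair_eq_of hΘ hp hq (hdv.trans hdv'.symm)
      subst hpq
      exact ihval isSSubst_empty hval'
    | vtermMiss _ _ _ νs' hν' hmiss =>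
      have hνeq : νs = νs' := funext fun i => neval_det (hν i) (hν' i)
      subst hνeq
      exact absurd hdv (hmiss p hp)
  | vtermMiss Θ X ns νs hν hmiss =>
    intro hΘ u' h'
    cases h' with
    | vtermHit _ _ _ νs' q u' hν' hq hdv' hval' =>
      have hνeq : νs = νs' := funext fun i => neval_det (hν i) (hν' i)
      subst hνeq
      exact absurd hdv' (hmiss q hq)
    | vtermMiss _ _ _ νs' hν' hmiss' =>
      have hνeq : νs = νs' := funext fun i => neval_det (hν i) (hν' i)
      subst hνeq
      rfl
  | app Θ f ss us hus ihs =>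
    intro hΘ u' h'
    cases h' with
    | app _ _ _ us' hus' =>
      exact congrArg (FTerm.app f) (funext fun j => ihs j hΘ (hus' j))
  | defdBase Θ h Xs hty ns νs u hν hlast hbody ihbody =>
    intro hΘ u' h'
    cases h' with
    | defdBase _ _ _ _ _ νs' u' hν' hlast' hbody' =>
      have hνeq : νs = νs' := funext fun i => neval_det (hν i) (hν' i)
      subst hνeq
      exact ihbody hΘ hbody'
    | defdStep _ _ _ _ _ νs' p' u' hν' hlast' hbody' =>
      exact absurd (neval_det hlast hlast') (by simp)
  | defdStep Θ h Xs hty ns νs p u hν hlast hbody ihbody =>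
    intro hΘ u' h'
    cases h' with
    | defdBase _ _ _ _ _ νs' u' hν' hlast' hbody' =>
      exact absurd (neval_det hlast hlast') (by simp)
    | defdStep _ _ _ _ _ νs' p' u' hν' hlast' hbody' =>
      have hνeq : νs = νs' := funext fun i => neval_det (hν i) (hν' i)
      have hpeq : p = p' := by have := neval_det hlast hlast'; omega
      subst hνeq; subst hpeq
      exact ihbody hΘ hbody'

theorem instC_congr {C' : Type} {G' : Type} {gar' : G' → ℕ}
    {cmap cmap' : C' → ITerm F ar C Fn far G gar Fh gnum gtys nar}
    {ren : G' → G} {hren : ∀ x, gar (ren x) = gar' x} {σn : ℕ → NTerm F ar}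
    (t₀ : ITerm F ar C' Fn far G' gar' Fh gnum gtys nar)
    (hc : ∀ c, t₀.IHasConst c → cmap c = cmap' c) :
    t₀.instC cmap ren hren σn = t₀.instC cmap' ren hren σn := by
  induction t₀ with
  | const c => exact hc c rfl
  | vterm x ns => rfl
  | app f ss ih =>
    exact congrArg (ITerm.app f) (funext fun j => ih j fun c hco => hc c ⟨j, hco⟩)
  | defd h Ys hty ns => rfl
/-- `h` is handled: numeral applications of `h` evaluate under the empty s-substitution. -/
def HandledI (D : NumDefs F ar) (DI : IDefs F ar C Fn far Fh gnum gtys nar) (σ : ℕ → ℕ)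
    (G : Type) (gar : G → ℕ) (h : Fh) : Prop :=
  ∀ (Xs : Fin (gnum h) → G) (hty : ∀ i, gar (Xs i) = gtys h i)
    (νs : Fin (nar h) → ℕ) (m : ℕ),
    ∃ u, SEval D DI σ (∅ : Finset (SPair F ar C Fn far G gar Fh gnum gtys nar))
      (ITerm.defd h Xs hty (Fin.snoc (fun i => NTerm.ofNat F ar (νs i))
        (NTerm.ofNat F ar m))) u

theorem idefd_total_of_handled {precI : Fh → Fh → Prop} (hDI : GoodIDefs precI DI)
    {h : Fh} (hh : HandledI D DI σ G gar h)
    {Xs : Fin (gnum h) → G} {hty : ∀ i, gar (Xs i) = gtys h i}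
    {ns : Fin (nar h + 1) → NTerm F ar} {νs : Fin (nar h) → ℕ} {m : ℕ}
    (hargs : ∀ i : Fin (nar h), NEval D σ (ns i.castSucc) (νs i))
    (hlast : NEval D σ (ns (Fin.last (nar h))) m) :
    ∃ u, SEval D DI σ (∅ : Finset (SPair F ar C Fn far G gar Fh gnum gtys nar))
      (ITerm.defd h Xs hty ns) u := by
  obtain ⟨u, hu⟩ := hh Xs hty νs m
  cases hu with
  | defdBase _ _ _ htyx _ νs' u hν' hlast' hbody =>
    cases Subsingleton.elim htyx hty
    have hν : νs' = νs := by
      funext i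
      have := hν' i
      rw [Fin.snoc_castSucc] at this
      exact neval_ofNat_eq this
    have hm : m = 0 := by
      have := hlast'
      rw [Fin.snoc_last] at this
      have := neval_ofNat_eq this
      omega
    subst hm
    rw [hν] at hbody
    rw [show instBody Xs hty (cutSub (nar h) fun i => NTerm.ofNat F ar (νs i))
          (ITerm.defd h Xs hty (Fin.snoc (fun i => NTerm.ofNat F ar (νs i))
            (NTerm.ofNat F ar 0))) (DI.base h) =
        instBody Xs hty (cutSub (nar h) fun i => NTerm.ofNat F ar (νs i))
          (ITerm.defd h Xs hty ns) (DI.base h) from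
      instC_congr (DI.base h) (fun c hc => by
        cases c with
        | none => exact absurd hc (hDI.base_noY h)
        | some c' => rfl)] at hbody
    exact ⟨u, SEval.defdBase ∅ h Xs hty ns νs u hargs hlast hbody⟩
  | defdStep _ _ _ htyx _ νs' p u hν' hlast' hbody =>
    cases Subsingleton.elim htyx hty
    have hν : νs' = νs := by
      funext i
      have := hν' i
      rw [Fin.snoc_castSucc] at this
      exact neval_ofNat_eq this
    have hm : m = p + 1 := by
      have := hlast'
      rw [Fin.snoc_last] at this
      exact (neval_ofNat_eq this).symm
    subst hm
    rw [hν] at hbody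
    exact ⟨u, SEval.defdStep ∅ h Xs hty ns νs p u hargs hlast hbody⟩

theorem instC_total {prec : F → F → Prop} (hwf : WellFounded prec) (hD : GoodNumDefs prec D)
    {precI : Fh → Fh → Prop} (hDI : GoodIDefs precI DI)
    {C' : Type} {G' : Type} {gar' : G' → ℕ}
    (t₀ : ITerm F ar C' Fn far G' gar' Fh gnum gtys nar)
    {cmap : C' → ITerm F ar C Fn far G gar Fh gnum gtys nar}
    {ren : G' → G} {hren : ∀ x, gar (ren x) = gar' x} {σn : ℕ → NTerm F ar}
    (hH : ∀ h', t₀.IHasIDef h' → HandledI D DI σ G gar h')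
    (hc : ∀ c, t₀.IHasConst c →
      ∃ u, SEval D DI σ (∅ : Finset (SPair F ar C Fn far G gar Fh gnum gtys nar)) (cmap c) u) :
    ∃ u, SEval D DI σ (∅ : Finset (SPair F ar C Fn far G gar Fh gnum gtys nar))
      (t₀.instC cmap ren hren σn) u := by
  induction t₀ with
  | const c => exact hc c rfl
  | vterm x ns =>
    choose ν hν using fun j => neval_total (σ := σ) hwf hD
      ((ns (Fin.cast (hren x) j)).subst σn)
    exact ⟨_, SEval.vtermMiss ∅ (ren x) _ ν hν
      (fun p hp => absurd hp (Finset.notMem_empty p))⟩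
  | app f ss ih =>
    choose us hus using fun j => ih j (fun h' ho => hH h' ⟨j, ho⟩)
      (fun c hco => hc c ⟨j, hco⟩)
    exact ⟨_, SEval.app ∅ f _ us hus⟩
  | defd h' Ys hty' ns =>
    choose ν hν using fun j => neval_total (σ := σ) hwf hD ((ns j).subst σn)
    exact idefd_total_of_handled hDI (hH h' rfl)
      (νs := fun i => ν i.castSucc) (fun i => hν i.castSucc) (hν (Fin.last (nar h')))

theorem handledI_all {prec : F → F → Prop} (hwf : WellFounded prec) (hD : GoodNumDefs prec D)
    {precI : Fh → Fh → Prop} (hwfI : WellFounded precI) (hDI : GoodIDefs precI DI)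
    (h : Fh) : HandledI D DI σ G gar h := by
  induction h using hwfI.induction with
  | _ h ihf =>
  intro Xs hty νs m
  induction m with
  | zero =>
    obtain ⟨u, hu⟩ := instC_total hwf hD hDI (DI.base h)
      (cmap := fun o => Option.elim o
        (ITerm.defd h Xs hty (Fin.snoc (fun i => NTerm.ofNat F ar (νs i))
          (NTerm.ofNat F ar 0))) fun c => ITerm.const c)
      (ren := Xs) (hren := hty)
      (σn := cutSub (nar h) fun i => NTerm.ofNat F ar (νs i))
      (fun h' ho => ihf h' (hDI.base_symbs h h' ho))
      (fun c hc => by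
        cases c with
        | none => exact absurd hc (hDI.base_noY h)
        | some c' => exact ⟨_, SEval.const ∅ c'⟩)
    refine ⟨u, SEval.defdBase ∅ h Xs hty _ νs u (fun i => ?_) ?_ hu⟩
    · rw [Fin.snoc_castSucc]; exact neval_ofNat _
    · rw [Fin.snoc_last]; exact neval_ofNat 0
  | succ m ihm =>
    obtain ⟨r, hr⟩ := ihm
    obtain ⟨u, hu⟩ := instC_total hwf hD hDI (DI.step h)
      (cmap := fun o => Option.elim o
        (ITerm.defd h Xs hty (Fin.snoc (fun i => NTerm.ofNat F ar (νs i))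
          (NTerm.ofNat F ar m))) fun c => ITerm.const c)
      (ren := Xs) (hren := hty)
      (σn := cutSub2 (nar h) (fun i => NTerm.ofNat F ar (νs i)) (NTerm.ofNat F ar m))
      (fun h' ho => ihf h' (hDI.step_symbs h h' ho))
      (fun c hc => by
        cases c with
        | none => exact ⟨r, hr⟩
        | some c' => exact ⟨_, SEval.const ∅ c'⟩)
    refine ⟨u, SEval.defdStep ∅ h Xs hty _ νs m u (fun i => ?_) ?_ hu⟩
    · rw [Fin.snoc_castSucc]; exact neval_ofNat _
    · rw [Fin.snoc_last]; exact neval_ofNat (m + 1)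

theorem seval_empty_total {prec : F → F → Prop} (hwf : WellFounded prec)
    (hD : GoodNumDefs prec D)
    {precI : Fh → Fh → Prop} (hwfI : WellFounded precI) (hDI : GoodIDefs precI DI)
    (t : ITerm F ar C Fn far G gar Fh gnum gtys nar) :
    ∃ u, SEval D DI σ (∅ : Finset (SPair F ar C Fn far G gar Fh gnum gtys nar)) t u := by
  induction t with
  | const c => exact ⟨_, SEval.const ∅ c⟩
  | vterm X ns =>
    choose ν hν using fun j => neval_total (σ := σ) hwf hD (ns j)
    exact ⟨_, SEval.vtermMiss ∅ X ns ν hν (fun p hp => absurd hp (Finset.notMem_empty p))⟩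
  | app f ss ih =>
    choose us hus using ih
    exact ⟨_, SEval.app ∅ f ss us hus⟩
  | defd h Xs hty ns =>
    choose ν hν using fun j => neval_total (σ := σ) hwf hD (ns j)
    exact idefd_total_of_handled hDI (handledI_all hwf hD hwfI hDI h)
      (νs := fun i => ν i.castSucc) (fun i => hν i.castSucc) (hν (Fin.last (nar h)))
theorem instSSub_pos_spec {Θ : Finset (SPair F ar C Fn far G gar Fh gnum gtys nar)}
    {v : IVar G gar}
    (hex : ∃ p, p ∈ Θ ∧ SPair.dvar σ p = v ∧ ∃ u, SEval D DI σ ∅ p.val u) :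
    ∃ p, p ∈ Θ ∧ SPair.dvar σ p = v ∧
      SEval D DI σ ∅ p.val (instSSub D DI Θ σ v) := by
  rw [instSSub, dif_pos hex]
  exact ⟨hex.choose, hex.choose_spec.1, hex.choose_spec.2.1,
    hex.choose_spec.2.2.choose_spec⟩

theorem instSSub_neg {Θ : Finset (SPair F ar C Fn far G gar Fh gnum gtys nar)}
    {v : IVar G gar}
    (hex : ¬ ∃ p, p ∈ Θ ∧ SPair.dvar σ p = v ∧ ∃ u, SEval D DI σ ∅ p.val u) :
    instSSub D DI Θ σ v = FTerm.var v := by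
  rw [instSSub, dif_neg hex]

theorem instSSub_eq {Θ : Finset (SPair F ar C Fn far G gar Fh gnum gtys nar)}
    (hΘ : IsSSubst Θ) {p : SPair F ar C Fn far G gar Fh gnum gtys nar}
    (hp : p ∈ Θ) {v : IVar G gar} (hdv : SPair.dvar σ p = v)
    {u : FTerm C Fn far G gar} (hu : SEval D DI σ ∅ p.val u) :
    instSSub D DI Θ σ v = u := by
  obtain ⟨q, hq, hdq, hval⟩ := instSSub_pos_spec ⟨p, hp, hdv, u, hu⟩
  have hqp : q = p := spair_eq_of hΘ hq hp (hdq.trans hdv.symm)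
  rw [hqp] at hval
  exact seval_det hval isSSubst_empty hu

theorem seval_project {Θ : Finset (SPair F ar C Fn far G gar Fh gnum gtys nar)}
    {t : ITerm F ar C Fn far G gar Fh gnum gtys nar} {u : FTerm C Fn far G gar}
    (h : SEval D DI σ Θ t u) (hΘ : IsSSubst Θ) :
    ∃ u₀, SEval D DI σ ∅ t u₀ ∧ u = FTerm.applyF (instSSub D DI Θ σ) u₀ := by
  induction h with
  | const Θ c => exact ⟨FTerm.const c, SEval.const ∅ c, rfl⟩
  | vtermHit Θ X ns νs p u hν hp hdv hval ihval =>
    refine ⟨FTerm.var ⟨X, νs⟩,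
      SEval.vtermMiss ∅ X ns νs hν (fun q hq => absurd hq (Finset.notMem_empty q)), ?_⟩
    exact (instSSub_eq hΘ hp hdv hval).symm
  | vtermMiss Θ X ns νs hν hmiss =>
    refine ⟨FTerm.var ⟨X, νs⟩,
      SEval.vtermMiss ∅ X ns νs hν (fun q hq => absurd hq (Finset.notMem_empty q)), ?_⟩
    have : instSSub D DI Θ σ ⟨X, νs⟩ = FTerm.var ⟨X, νs⟩ :=
      instSSub_neg (by rintro ⟨p, hp, hdv, -⟩; exact hmiss p hp hdv)
    exact this.symm
  | app Θ f ss us hus ihs =>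
    choose u₀s h₀s hEqs using fun j => ihs j hΘ
    exact ⟨FTerm.app f u₀s, SEval.app ∅ f ss u₀s h₀s,
      congrArg (FTerm.app f) (funext hEqs)⟩
  | defdBase Θ h Xs hty ns νs u hν hlast hbody ihbody =>
    obtain ⟨u₀, h₀, hEq⟩ := ihbody hΘ
    exact ⟨u₀, SEval.defdBase ∅ h Xs hty ns νs u₀ hν hlast h₀, hEq⟩
  | defdStep Θ h Xs hty ns νs p u hν hlast hbody ihbody =>
    obtain ⟨u₀, h₀, hEq⟩ := ihbody hΘ
    exact ⟨u₀, SEval.defdStep ∅ h Xs hty ns νs p u₀ hν hlast h₀, hEq⟩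

theorem seval_lift {Θ : Finset (SPair F ar C Fn far G gar Fh gnum gtys nar)}
    (htot : ∀ q : SPair F ar C Fn far G gar Fh gnum gtys nar, q ∈ Θ →
      ∃ u, SEval D DI σ (∅ : Finset (SPair F ar C Fn far G gar Fh gnum gtys nar)) q.val u)
    {t : ITerm F ar C Fn far G gar Fh gnum gtys nar} {u₀ : FTerm C Fn far G gar}
    (h : SEval D DI σ ∅ t u₀) :
    SEval D DI σ Θ t (FTerm.applyF (instSSub D DI Θ σ) u₀) := by
  have key : ∀ {Θ₀ : Finset (SPair F ar C Fn far G gar Fh gnum gtys nar)}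
      {t : ITerm F ar C Fn far G gar Fh gnum gtys nar} {u₀ : FTerm C Fn far G gar},
      SEval D DI σ Θ₀ t u₀ → Θ₀ = ∅ →
      SEval D DI σ Θ t (FTerm.applyF (instSSub D DI Θ σ) u₀) := by
    intro Θ₀ t u₀ h
    induction h with
    | const _ c => exact fun _ => SEval.const Θ c
    | vtermHit _ X ns νs p u hν hp =>
      intro hE
      rw [hE] at hp
      exact absurd hp (Finset.notMem_empty p)
    | vtermMiss _ X ns νs hν hmiss =>
      intro hE
      show SEval D DI σ Θ (ITerm.vterm X ns) (instSSub D DI Θ σ ⟨X, νs⟩)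
      by_cases hex : ∃ p, p ∈ Θ ∧ SPair.dvar σ p = (⟨X, νs⟩ : IVar G gar) ∧
          ∃ u, SEval D DI σ ∅ p.val u
      · obtain ⟨p, hp, hdv, hval⟩ := instSSub_pos_spec hex
        exact SEval.vtermHit Θ X ns νs p _ hν hp hdv hval
      · rw [instSSub_neg hex]
        exact SEval.vtermMiss Θ X ns νs hν (fun p hp hdv => hex ⟨p, hp, hdv, htot p hp⟩)
    | app _ f ss us hus ihs =>
      intro hE
      exact SEval.app Θ f ss _ (fun j => ihs j hE)
    | defdBase _ h Xs hty ns νs u hν hlast hbody ihbody =>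
      intro hE
      exact SEval.defdBase Θ h Xs hty ns νs _ hν hlast (ihbody hE)
    | defdStep _ h Xs hty ns νs p u hν hlast hbody ihbody =>
      intro hE
      exact SEval.defdStep Θ h Xs hty ns νs p _ hν hlast (ihbody hE)
  exact key h rfl

theorem instStar_pos_spec {Θ₁ Θ₂ : Finset (SPair F ar C Fn far G gar Fh gnum gtys nar)}
    {v : IVar G gar}
    (hex : ∃ p, p ∈ Θ₁ ∧ SPair.dvar σ p = v ∧ ∃ u, SEval D DI σ Θ₂ p.val u) :
    ∃ p, p ∈ Θ₁ ∧ SPair.dvar σ p = v ∧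
      SEval D DI σ Θ₂ p.val (instStar D DI Θ₁ Θ₂ σ v) := by
  rw [instStar, dif_pos hex]
  exact ⟨hex.choose, hex.choose_spec.1, hex.choose_spec.2.1,
    hex.choose_spec.2.2.choose_spec⟩

end Aux
end Schematic

open Schematic

/-- Let `Θ₁, Θ₂` be normal s-substitutions such that `(Θ₁,Θ₂)` is composable.
Then for all parameter assignments `σ`, `(Θ₁ ⋆ Θ₂)[σ] = Θ₁[σ] ∘ Θ₂[σ]`: the instantiation of
the schematic composition equals the composition of the instantiated first-order
substitutions (where `(θ₁ ∘ θ₂)(v) = (θ₁ v)θ₂`). -/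
theorem statement7
    (F : Type) (ar : F → ℕ) (prec : F → F → Prop)
    (hirr : ∀ f, ¬ prec f f) (htrans : Transitive prec) (hwf : WellFounded prec)
    (D : NumDefs F ar) (hD : GoodNumDefs prec D)
    (C Fn : Type) (far : Fn → ℕ) (G : Type) (gar : G → ℕ)
    (Fh : Type) (gnum : Fh → ℕ) (gtys : (h : Fh) → Fin (gnum h) → ℕ) (nar : Fh → ℕ)
    (precI : Fh → Fh → Prop)
    (hirrI : ∀ h, ¬ precI h h) (htransI : Transitive precI) (hwfI : WellFounded precI)
    (DI : IDefs F ar C Fn far Fh gnum gtys nar) (hDI : GoodIDefs precI DI)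
    (Θ₁ Θ₂ : Finset (SPair F ar C Fn far G gar Fh gnum gtys nar))
    (hΘ₁ : IsSSubst Θ₁) (hΘ₂ : IsSSubst Θ₂)
    (hn₁ : IsNormalS D DI Θ₁) (hn₂ : IsNormalS D DI Θ₂)
    (hcomp : ComposableS D DI Θ₁ Θ₂) :
    ∀ (σ : ℕ → ℕ) (v : IVar G gar),
      instStar D DI Θ₁ Θ₂ σ v =
        FTerm.applyF (instSSub D DI Θ₂ σ) (instSSub D DI Θ₁ σ v) := by
  intro σ v
  by_cases hex : ∃ p, p ∈ Θ₁ ∧ SPair.dvar σ p = v ∧ ∃ u, SEval D DI σ Θ₂ p.val u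
  · obtain ⟨p, hp, hdv, hu⟩ := instStar_pos_spec hex
    obtain ⟨u₀, h₀, hEq⟩ := seval_project hu hΘ₂
    rw [instSSub_eq hΘ₁ hp hdv h₀]
    exact hEq
  · rw [instStar, dif_neg hex]
    have h1 : instSSub D DI Θ₁ σ v = FTerm.var v := by
      refine instSSub_neg ?_
      rintro ⟨p, hp, hdv, u₀, h₀⟩
      exact hex ⟨p, hp, hdv, _,
        seval_lift (fun q _ => seval_empty_total hwf hD hwfI hDI q.val) h₀⟩
    rw [h1]
    rfl
end

section
/- Let Θ₁ and Θ₂ be normal s-substitutions such that (Θ₁,Θ₂) is composable. Then the composition Θ₁ ⋆ Θ₂ is a normal s-substitution. -/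
namespace Schematic

variable {F : Type} {ar : F → ℕ} {C : Type} {Fn : Type} {far : Fn → ℕ}
  {G : Type} {gar : G → ℕ} {Fh : Type} {gnum : Fh → ℕ}
  {gtys : (h : Fh) → Fin (gnum h) → ℕ} {nar : Fh → ℕ}

/-- Key lemma: from an evaluation of `t` under the s-substitution `Θ`, one extracts an
evaluation of `t` under the empty substitution, and every variable of the result either comes
from the evaluation of a range term of `Θ`, or occurs in the empty-substitution evaluation
and is not an instantiated domain variable of `Θ`. -/
theorem seval_key {D : NumDefs F ar} {DI : IDefs F ar C Fn far Fh gnum gtys nar}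
    {σ : ℕ → ℕ} {Θ : Finset (SPair F ar C Fn far G gar Fh gnum gtys nar)}
    {t : ITerm F ar C Fn far G gar Fh gnum gtys nar} {u : FTerm C Fn far G gar}
    (h : SEval D DI σ Θ t u) :
    ∃ u₀, SEval D DI σ ∅ t u₀ ∧ ∀ r, u.HasVar r →
      (∃ q ∈ Θ, ∃ u', SEval D DI σ ∅ q.val u' ∧ u'.HasVar r) ∨
      (u₀.HasVar r ∧ ∀ q ∈ Θ, q.dvar σ ≠ r) := by
  induction h with
  | const Θ c => exact ⟨_, SEval.const ∅ c, fun r hr => hr.elim⟩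
  | vtermHit Θ X ns νs p u hne hp hdv hev ih =>
      exact ⟨FTerm.var ⟨X, νs⟩, SEval.vtermMiss ∅ X ns νs hne (by simp),
        fun r hr => Or.inl ⟨p, hp, u, hev, hr⟩⟩
  | vtermMiss Θ X ns νs hne hmiss =>
      refine ⟨FTerm.var ⟨X, νs⟩, SEval.vtermMiss ∅ X ns νs hne (by simp), fun r hr => ?_⟩
      exact Or.inr ⟨hr, fun q hq => hr ▸ hmiss q hq⟩
  | app Θ f ss us hss ih =>
      choose u₀ h₀ hrest using ih
      refine ⟨FTerm.app f u₀, SEval.app ∅ f ss u₀ h₀, fun r hr => ?_⟩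
      obtain ⟨j, hj⟩ := hr
      rcases hrest j r hj with h | ⟨h1, h2⟩
      · exact Or.inl h
      · exact Or.inr ⟨⟨j, h1⟩, h2⟩
  | defdBase Θ h Xs hty ns νs u hns h0 hb ih =>
      obtain ⟨u₀, h₀, hrest⟩ := ih
      exact ⟨u₀, SEval.defdBase ∅ h Xs hty ns νs u₀ hns h0 h₀, hrest⟩
  | defdStep Θ h Xs hty ns νs p u hns h0 hb ih =>
      obtain ⟨u₀, h₀, hrest⟩ := ih
      exact ⟨u₀, SEval.defdStep ∅ h Xs hty ns νs p u₀ hns h0 h₀, hrest⟩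

end Schematic

open Schematic

/-- Let `Θ₁, Θ₂` be normal s-substitutions such that `(Θ₁,Θ₂)` is composable.
Then the composition `Θ₁ ⋆ Θ₂` (whose pairs are `(Xᵢ(s⃗ᵢ), tᵢΘ₂)` for `(Xᵢ(s⃗ᵢ),tᵢ) ∈ Θ₁`
together with the pairs of `Θ₂`) is a normal s-substitution:  (i) any pair coming from `Θ₁`
and any pair coming from `Θ₂` have distinct global variables or essentially distinct argument
tuples (so `Θ₁ ⋆ Θ₂` satisfies the s-substitution condition), and (ii) for every parameter
assignment `σ`, no instantiated domain variable of `Θ₁ ⋆ Θ₂` occurs in any range term of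
`(Θ₁ ⋆ Θ₂)[σ]` (the range terms being `tᵢΘ₂[σ]` for pairs from `Θ₁` and `σ(r_j)↓_ι` for
pairs from `Θ₂`). -/
theorem statement8
    (F : Type) (ar : F → ℕ) (prec : F → F → Prop)
    (hirr : ∀ f, ¬ prec f f) (htrans : Transitive prec) (hwf : WellFounded prec)
    (D : NumDefs F ar) (hD : GoodNumDefs prec D)
    (C Fn : Type) (far : Fn → ℕ) (G : Type) (gar : G → ℕ)
    (Fh : Type) (gnum : Fh → ℕ) (gtys : (h : Fh) → Fin (gnum h) → ℕ) (nar : Fh → ℕ)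
    (precI : Fh → Fh → Prop)
    (hirrI : ∀ h, ¬ precI h h) (htransI : Transitive precI) (hwfI : WellFounded precI)
    (DI : IDefs F ar C Fn far Fh gnum gtys nar) (hDI : GoodIDefs precI DI)
    (Θ₁ Θ₂ : Finset (SPair F ar C Fn far G gar Fh gnum gtys nar))
    (hΘ₁ : IsSSubst Θ₁) (hΘ₂ : IsSSubst Θ₂)
    (hn₁ : IsNormalS D DI Θ₁) (hn₂ : IsNormalS D DI Θ₂)
    (hcomp : ComposableS D DI Θ₁ Θ₂) :
    (∀ p ∈ Θ₁, ∀ q ∈ Θ₂, p.X ≠ q.X ∨ ∀ σ : ℕ → ℕ, p.dvar σ ≠ q.dvar σ) ∧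
    ∀ σ : ℕ → ℕ, ∀ r : IVar G gar,
      ((∃ p ∈ Θ₁, r = p.dvar σ) ∨ (∃ q ∈ Θ₂, r = q.dvar σ)) →
      (∀ p ∈ Θ₁, ∀ u, SEval D DI σ Θ₂ p.val u → ¬ u.HasVar r) ∧
      (∀ q ∈ Θ₂, ∀ u, SEval D DI σ ∅ q.val u → ¬ u.HasVar r) := by
  refine ⟨fun p hp q hq => Or.inr fun σ => (hcomp σ).1 p hp q hq, fun σ r hr => ⟨?_, ?_⟩⟩
  · intro p hp u hev hvar
    obtain ⟨u₀, h₀, key⟩ := seval_key hev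
    rcases key r hvar with ⟨q, hq, u', hev', hvar'⟩ | ⟨hvar₀, hdisj⟩
    · rcases hr with ⟨p', hp', rfl⟩ | ⟨q', hq', rfl⟩
      · exact (hcomp σ).2 p' hp' q hq u' hev' hvar'
      · exact hn₂ σ q' hq' q hq u' hev' hvar'
    · rcases hr with ⟨p', hp', rfl⟩ | ⟨q', hq', rfl⟩
      · exact hn₁ σ p' hp' p hp u₀ h₀ hvar₀
      · exact hdisj q' hq' rfl
  · intro q hq u hev hvar
    rcases hr with ⟨p', hp', rfl⟩ | ⟨q', hq', rfl⟩
    · exact (hcomp σ).2 p' hp' q hq u hev hvar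
    · exact hn₂ σ q' hq' q hq u hev hvar
end
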